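/- arXiv:0708.2626 — 6 statements merged into one kernel-verified Lean document; each statement's English description precedes it below -/
import Mathlib

section
/- Let (V, ω) be a symplectic vector space, L ⊆ V a Lagrangian subspace, and I = I_S^{(L)} ⊗ Λ(V*) + S(V) ⊗ I_Λ as above. Then the contracting homotopy δ⁻¹ preserves I: δ⁻¹(I) ⊆ I. -/
open ExteriorAlgebra TensorProduct

/-- The symmetry relation on the tensor algebra: `x ⊗ y ~ y ⊗ x` for `x, y ∈ V`. -/
def symRel (k V : Type*) [Field k] [AddCommGroup V] [Module k V] :
    TensorAlgebra k V → TensorAlgebra k V → Prop := fun a b =>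
  ∃ x y : V, a = TensorAlgebra.ι k x * TensorAlgebra.ι k y ∧
    b = TensorAlgebra.ι k y * TensorAlgebra.ι k x

/-- The symmetric algebra `S(V)`, realized as the quotient of the tensor algebra
by the symmetry relation. -/
def KoszulSymAlg (k V : Type*) [Field k] [AddCommGroup V] [Module k V] : Type _ :=
  RingQuot (symRel k V)

noncomputable instance (k V : Type*) [Field k] [AddCommGroup V] [Module k V] :
    Ring (KoszulSymAlg k V) := inferInstanceAs (Ring (RingQuot (symRel k V)))

noncomputable instance (k V : Type*) [Field k] [AddCommGroup V] [Module k V] :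
    Algebra k (KoszulSymAlg k V) := inferInstanceAs (Algebra k (RingQuot (symRel k V)))

/-- The canonical linear embedding `V → S(V)`. -/
noncomputable def symι (k V : Type*) [Field k] [AddCommGroup V] [Module k V] :
    V →ₗ[k] KoszulSymAlg k V :=
  (RingQuot.mkAlgHom k (symRel k V)).toLinearMap.comp (TensorAlgebra.ι k)

variable (k V : Type*) [Field k] [AddCommGroup V] [Module k V]

/-- The symmetric monomial `x₁ ⊙ ⋯ ⊙ x_m ∈ S(V)`. -/
noncomputable def symMon {m : ℕ} (x : Fin m → V) : KoszulSymAlg k V :=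
  (List.ofFn fun i => symι k V (x i)).prod

/-- The exterior monomial `y₁ ∧ ⋯ ∧ y_n ∈ Λ(V*)`. -/
noncomputable def extMon {n : ℕ} (y : Fin n → Module.Dual k V) :
    ExteriorAlgebra k (Module.Dual k V) :=
  (List.ofFn fun j => ExteriorAlgebra.ι k (y j)).prod

/-- The ideal `I_S^{(L)}` of `S(V)` generated by the subspace `L`, as a `k`-submodule. -/
noncomputable def symIdealOf (L : Submodule k V) : Submodule k (KoszulSymAlg k V) :=
  Submodule.span k {s | ∃ p : KoszulSymAlg k V, ∃ x ∈ L, s = p * symι k V x}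

/-- The ideal `I_Λ` of `Λ(V*)` generated by `u(L)`, as a `k`-submodule, where
`u x = ω(x, ·)`. -/
noncomputable def extIdealOf (ω : V →ₗ[k] V →ₗ[k] k) (L : Submodule k V) :
    Submodule k (ExteriorAlgebra k (Module.Dual k V)) :=
  Submodule.span k {t | ∃ x ∈ L, ∃ a b : ExteriorAlgebra k (Module.Dual k V),
    t = a * ExteriorAlgebra.ι k (ω x) * b}

/-- The submodule `I = I_S^{(L)} ⊗ Λ(V*) + S(V) ⊗ I_Λ` of `S(V) ⊗ Λ(V*)`. -/
noncomputable def lagrangianIdeal (ω : V →ₗ[k] V →ₗ[k] k) (L : Submodule k V) :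
    Submodule k (KoszulSymAlg k V ⊗[k] ExteriorAlgebra k (Module.Dual k V)) :=
  Submodule.span k
    ({z | ∃ p ∈ symIdealOf k V L, ∃ η : ExteriorAlgebra k (Module.Dual k V),
        z = p ⊗ₜ[k] η} ∪
     {z | ∃ q : KoszulSymAlg k V, ∃ α ∈ extIdealOf k V ω L, z = q ⊗ₜ[k] α})

/-!
The set `I` is spanned by the tensors `x₁ ⊙ ⋯ ⊙ x_m ⊗ y₁ ∧ ⋯ ∧ y_n` in which some `x_i` lies in
`L` or some `y_j` lies in `u(L)`, and `δ⁻¹` is prescribed on exactly these tensors. Every summand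
of `δ⁻¹` on such a tensor still contains the factor witnessing membership in `I`, except when the
factor removed is `y_j = u(v)` with `v ∈ L`; that summand gains the symmetric factor
`u⁻¹(y_j) = v ∈ L` instead. Commutativity of `S(V)` puts `v` in the position required by the
generators of `I_S^{(L)}`.
-/

section

variable {k V}

lemma apply_mem_span_image2 {R M N P : Type*} [CommSemiring R] [AddCommMonoid M]
    [AddCommMonoid N] [AddCommMonoid P] [Module R M] [Module R N] [Module R P]
    (f : M →ₗ[R] N →ₗ[R] P) {s : Set M} {t : Set N} {m : M} {n : N}
    (hm : m ∈ Submodule.span R s) (hn : n ∈ Submodule.span R t) :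
    f m n ∈ Submodule.span R (Set.image2 (fun a b => f a b) s t) :=
  Submodule.map₂_span_span R f s t ▸ Submodule.apply_mem_map₂ f hm hn

lemma span_range_list_prod_map_eq_top {R M A : Type*} [CommSemiring R] [Semiring A]
    [Algebra R A] {f : M → A} (hf : Algebra.adjoin R (Set.range f) = ⊤) :
    Submodule.span R (Set.range fun l : List M => (l.map f).prod) = ⊤ := by
  refine eq_top_iff.2 fun a _ => ?_
  have ha : a ∈ Subalgebra.toSubmodule (Algebra.adjoin R (Set.range f)) := by simp [hf]
  rw [Algebra.adjoin_eq_span] at ha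
  refine Submodule.span_mono (fun b hb => ?_) ha
  induction hb using Submonoid.closure_induction with
  | mem b hb => obtain ⟨x, rfl⟩ := hb; exact ⟨[x], by simp⟩
  | one => exact ⟨[], rfl⟩
  | mul b c _ _ hb hc =>
      obtain ⟨l, rfl⟩ := hb
      obtain ⟨l', rfl⟩ := hc
      exact ⟨l ++ l', by simp⟩

noncomputable def symMk : TensorAlgebra k V →ₐ[k] KoszulSymAlg k V :=
  RingQuot.mkAlgHom k (symRel k V)

lemma adjoin_range_symι : Algebra.adjoin k (Set.range (symι k V)) = ⊤ := by
  have hrange : Set.range (symι k V) = symMk '' Set.range (TensorAlgebra.ι k) := by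
    rw [← Set.range_comp]; rfl
  rw [hrange, ← AlgHom.map_adjoin, TensorAlgebra.adjoin_range_ι, Algebra.map_top,
    AlgHom.range_eq_top]
  exact RingQuot.mkAlgHom_surjective k _

lemma symι_mul_comm (x : V) (b : KoszulSymAlg k V) : symι k V x * b = b * symι k V x := by
  have hle : Algebra.adjoin k (Set.range (symι k V)) ≤
      Subalgebra.centralizer k {symι k V x} := by
    refine Algebra.adjoin_le ?_
    rintro _ ⟨y, rfl⟩
    rw [SetLike.mem_coe, Subalgebra.mem_centralizer_iff]
    rintro _ rfl
    have h : symMk (TensorAlgebra.ι k x * TensorAlgebra.ι k y) =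
        symMk (TensorAlgebra.ι k y * TensorAlgebra.ι k x) :=
      RingQuot.mkAlgHom_rel k ⟨x, y, rfl, rfl⟩
    rwa [map_mul, map_mul] at h
  rw [adjoin_range_symι, top_le_iff] at hle
  have hb : b ∈ Subalgebra.centralizer k {symι k V x} := hle ▸ Algebra.mem_top
  exact (Subalgebra.mem_centralizer_iff k).1 hb _ rfl

lemma list_prod_mem_symIdealOf {L : Submodule k V} {v : V} (hv : v ∈ L)
    {l : List (KoszulSymAlg k V)} (hl : symι k V v ∈ l) : l.prod ∈ symIdealOf k V L := by
  obtain ⟨s, t, rfl⟩ := List.append_of_mem hl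
  refine Submodule.subset_span ⟨s.prod * t.prod, v, hv, ?_⟩
  rw [List.prod_append, List.prod_cons, symι_mul_comm, mul_assoc]

lemma list_prod_mem_extIdealOf {ω : V →ₗ[k] V →ₗ[k] k} {L : Submodule k V} {v : V}
    (hv : v ∈ L) {l : List (ExteriorAlgebra k (Module.Dual k V))}
    (hl : ExteriorAlgebra.ι k (ω v) ∈ l) : l.prod ∈ extIdealOf k V ω L := by
  obtain ⟨s, t, rfl⟩ := List.append_of_mem hl
  exact Submodule.subset_span ⟨v, hv, s.prod, t.prod, by
    rw [List.prod_append, List.prod_cons, mul_assoc]⟩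

lemma mem_span_symMonomials (p : KoszulSymAlg k V) :
    p ∈ Submodule.span k (Set.range fun l : List V => (l.map (symι k V)).prod) := by
  rw [span_range_list_prod_map_eq_top adjoin_range_symι]; exact Submodule.mem_top

lemma mem_span_extMonomials (η : ExteriorAlgebra k (Module.Dual k V)) :
    η ∈ Submodule.span k (Set.range fun l : List (Module.Dual k V) =>
      (l.map (ExteriorAlgebra.ι k)).prod) := by
  rw [span_range_list_prod_map_eq_top CliffordAlgebra.adjoin_range_ι]; exact Submodule.mem_top

lemma symIdealOf_le_span (L : Submodule k V) :
    symIdealOf k V L ≤ Submodule.span k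
      {p | ∃ l : List V, (∃ v ∈ L, v ∈ l) ∧ (l.map (symι k V)).prod = p} := by
  refine Submodule.span_le.2 ?_
  rintro _ ⟨q, v, hv, rfl⟩
  refine Submodule.span_mono ?_ (Submodule.apply_mem_span_image_of_mem_span
    (LinearMap.mulRight k (symι k V v)) (mem_span_symMonomials q))
  rintro _ ⟨_, ⟨l, rfl⟩, rfl⟩
  exact ⟨l ++ [v], ⟨v, hv, by simp⟩, by simp⟩

lemma extIdealOf_le_span (ω : V →ₗ[k] V →ₗ[k] k) (L : Submodule k V) :
    extIdealOf k V ω L ≤ Submodule.span k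
      {η | ∃ l : List (Module.Dual k V), (∃ v ∈ L, ω v ∈ l) ∧
        (l.map (ExteriorAlgebra.ι k)).prod = η} := by
  refine Submodule.span_le.2 ?_
  rintro _ ⟨v, hv, a, b, rfl⟩
  refine Submodule.span_mono ?_ (apply_mem_span_image2
    ((LinearMap.mul k _).comp (LinearMap.mulRight k (ExteriorAlgebra.ι k (ω v))))
    (mem_span_extMonomials a) (mem_span_extMonomials b))
  rintro _ ⟨_, ⟨l, rfl⟩, _, ⟨l', rfl⟩, rfl⟩
  exact ⟨l ++ ω v :: l', ⟨v, hv, by simp⟩, by simp [mul_assoc]⟩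

def lagrangianMonomials (ω : V →ₗ[k] V →ₗ[k] k) (L : Submodule k V) :
    Set (KoszulSymAlg k V ⊗[k] ExteriorAlgebra k (Module.Dual k V)) :=
  {z | ∃ (l : List V) (l' : List (Module.Dual k V)),
    ((∃ v ∈ L, v ∈ l) ∨ ∃ v ∈ L, ω v ∈ l') ∧
      (l.map (symι k V)).prod ⊗ₜ[k] (l'.map (ExteriorAlgebra.ι k)).prod = z}

lemma lagrangianIdeal_le_span_lagrangianMonomials (ω : V →ₗ[k] V →ₗ[k] k)
    (L : Submodule k V) :
    lagrangianIdeal k V ω L ≤ Submodule.span k (lagrangianMonomials ω L) := by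
  refine Submodule.span_le.2 ?_
  rintro _ (⟨p, hp, η, rfl⟩ | ⟨q, α, hα, rfl⟩)
  · refine Submodule.span_mono ?_ (apply_mem_span_image2 (TensorProduct.mk k _ _)
      (symIdealOf_le_span L hp) (mem_span_extMonomials η))
    rintro _ ⟨_, ⟨l, hl, rfl⟩, _, ⟨l', rfl⟩, rfl⟩
    exact ⟨l, l', Or.inl hl, rfl⟩
  · refine Submodule.span_mono ?_ (apply_mem_span_image2 (TensorProduct.mk k _ _)
      (mem_span_symMonomials q) (extIdealOf_le_span ω L hα))
    rintro _ ⟨_, ⟨l, rfl⟩, _, ⟨l', hl', rfl⟩, rfl⟩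
    exact ⟨l, l', Or.inr hl', rfl⟩

lemma homotopy_summand_mem_lagrangianIdeal {ω : V →ₗ[k] V →ₗ[k] k}
    {u : V ≃ₗ[k] Module.Dual k V} (hu : ∀ x y : V, u x y = ω x y) {L : Submodule k V}
    {m n : ℕ} {x : Fin m → V} {y : Fin n → Module.Dual k V}
    (hxy : (∃ v ∈ L, v ∈ List.ofFn x) ∨ ∃ v ∈ L, ω v ∈ List.ofFn y) (j : Fin n) :
    (symι k V (u.symm (y j)) * symMon k V x) ⊗ₜ[k]
        ((List.ofFn fun j' => ExteriorAlgebra.ι k (y j')).eraseIdx j).prod ∈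
      lagrangianIdeal k V ω L := by
  have hsym : ∀ w : V, symι k V w * symMon k V x =
      (symι k V w :: List.ofFn fun i => symι k V (x i)).prod := fun w => rfl
  rcases hxy with ⟨v, hv, hvx⟩ | ⟨v, hv, hvy⟩
  · refine Submodule.subset_span (Or.inl ⟨_, ?_, _, rfl⟩)
    rw [hsym]
    refine list_prod_mem_symIdealOf hv (List.mem_cons_of_mem _ ?_)
    obtain ⟨i, rfl⟩ := List.mem_ofFn.1 hvx
    exact List.mem_ofFn.2 ⟨i, rfl⟩
  obtain ⟨j₀, hj₀⟩ := List.mem_ofFn.1 hvy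
  by_cases hj : j = j₀
  · have hyj : y j = u v := by rw [hj, hj₀]; exact (LinearMap.ext (hu v)).symm
    have huv : u.symm (y j) = v := u.symm_apply_eq.2 hyj
    refine Submodule.subset_span (Or.inl ⟨_, ?_, _, rfl⟩)
    rw [hsym, huv]
    exact list_prod_mem_symIdealOf hv List.mem_cons_self
  · refine Submodule.subset_span (Or.inr ⟨_, _, list_prod_mem_extIdealOf hv ?_, rfl⟩)
    rw [List.mem_eraseIdx_iff_getElem]
    exact ⟨j₀, by simp, Fin.val_ne_of_ne (Ne.symm hj), by simp [hj₀]⟩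

end

theorem contracting_homotopy_preserves_lagrangian_ideal
    (ω : V →ₗ[k] V →ₗ[k] k)
    (u : V ≃ₗ[k] Module.Dual k V) (hu : ∀ x y : V, u x y = ω x y)
    (L : Submodule k V)
    (δinv : (KoszulSymAlg k V ⊗[k] ExteriorAlgebra k (Module.Dual k V)) →ₗ[k]
      (KoszulSymAlg k V ⊗[k] ExteriorAlgebra k (Module.Dual k V)))
    (hδinv : ∀ (m n : ℕ) (x : Fin m → V) (y : Fin n → Module.Dual k V),
      δinv (symMon k V x ⊗ₜ[k] extMon k V y) =
        (((m + n : ℕ) : k))⁻¹ •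
          ∑ j : Fin n, ((-1 : k) ^ (j : ℕ)) •
            ((symι k V (u.symm (y j)) * symMon k V x) ⊗ₜ[k]
              ((List.ofFn fun j' => ExteriorAlgebra.ι k (y j')).eraseIdx j).prod)) :
    ∀ a ∈ lagrangianIdeal k V ω L, δinv a ∈ lagrangianIdeal k V ω L := by
  suffices h : Submodule.span k (lagrangianMonomials ω L) ≤
      (lagrangianIdeal k V ω L).comap δinv from
    fun a ha => h (lagrangianIdeal_le_span_lagrangianMonomials ω L ha)
  refine Submodule.span_le.2 ?_
  rintro _ ⟨l, l', hll', rfl⟩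
  have hmon : (l.map (symι k V)).prod ⊗ₜ[k] (l'.map (ExteriorAlgebra.ι k)).prod =
      symMon k V l.get ⊗ₜ[k] extMon k V l'.get := by
    simp [symMon, extMon, List.ofFn_getElem_eq_map]
  rw [SetLike.mem_coe, Submodule.mem_comap, hmon, hδinv]
  rw [← List.ofFn_get l, ← List.ofFn_get l'] at hll'
  exact Submodule.smul_mem _ _ <| Submodule.sum_mem _ fun j _ =>
    Submodule.smul_mem _ _ (homotopy_summand_mem_lagrangianIdeal hu hll' j)
end

section
/- Let V be a free A-module of rank 2ν over a commutative ring A with a nondegenerate alternating A-bilinear form ω, split as V = L ⊕ L' with both L and L' Lagrangian, with basis e_1,...,e_ν of L and e_{ν+1},...,e_{2ν} of L'. Let Υ₀ be the set of nonincreasing index sequences and e_I = e_{i₁}⊗...⊗e_{i_p} for I = (i₁ ≥ ... ≥ i_p). Then the images {μ_W(e_I) : I ∈ Υ₀} form an A-basis of the Weyl algebra W(V) = T(V)/I_W, and the images {μ_S(e_I) : I ∈ Υ₀} form an A-basis of the symmetric algebra S(V). -/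
/-- The Weyl relation on the tensor algebra `T(V)`:
`x ⊗ y − y ⊗ x ~ λ ω(x,y)` for `x, y ∈ V`. -/
def weylRel (A V : Type*) [CommRing A] [AddCommGroup V] [Module A V]
    (ω : V →ₗ[A] V →ₗ[A] A) (lam : A) :
    TensorAlgebra A V → TensorAlgebra A V → Prop := fun a b =>
  ∃ x y : V,
    a = TensorAlgebra.ι A x * TensorAlgebra.ι A y -
        TensorAlgebra.ι A y * TensorAlgebra.ι A x ∧
    b = algebraMap A (TensorAlgebra A V) (lam * ω x y)

/-- The Weyl algebra `W(V) = T(V)/I_W`. -/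
def WeylAlgebra (A V : Type*) [CommRing A] [AddCommGroup V] [Module A V]
    (ω : V →ₗ[A] V →ₗ[A] A) (lam : A) : Type _ :=
  RingQuot (weylRel A V ω lam)

noncomputable instance (A V : Type*) [CommRing A] [AddCommGroup V] [Module A V]
    (ω : V →ₗ[A] V →ₗ[A] A) (lam : A) : Ring (WeylAlgebra A V ω lam) :=
  inferInstanceAs (Ring (RingQuot (weylRel A V ω lam)))

noncomputable instance (A V : Type*) [CommRing A] [AddCommGroup V] [Module A V]
    (ω : V →ₗ[A] V →ₗ[A] A) (lam : A) : Algebra A (WeylAlgebra A V ω lam) :=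
  inferInstanceAs (Algebra A (RingQuot (weylRel A V ω lam)))

/-- The canonical projection `μ_W : T(V) → W(V)` as an `A`-linear map. -/
noncomputable def muW (A V : Type*) [CommRing A] [AddCommGroup V] [Module A V]
    (ω : V →ₗ[A] V →ₗ[A] A) (lam : A) :
    TensorAlgebra A V →ₗ[A] WeylAlgebra A V ω lam :=
  (RingQuot.mkAlgHom A (weylRel A V ω lam)).toLinearMap

/-- The symmetry relation on the tensor algebra. -/
def symCRel (A V : Type*) [CommRing A] [AddCommGroup V] [Module A V] :
    TensorAlgebra A V → TensorAlgebra A V → Prop := fun a b =>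
  ∃ x y : V, a = TensorAlgebra.ι A x * TensorAlgebra.ι A y ∧
    b = TensorAlgebra.ι A y * TensorAlgebra.ι A x

/-- The symmetric algebra `S(V) = T(V)/I_S`, realized as the quotient of the tensor
algebra by the symmetry relation. -/
def SymCAlg (A V : Type*) [CommRing A] [AddCommGroup V] [Module A V] : Type _ :=
  RingQuot (symCRel A V)

noncomputable instance (A V : Type*) [CommRing A] [AddCommGroup V] [Module A V] :
    Ring (SymCAlg A V) := inferInstanceAs (Ring (RingQuot (symCRel A V)))

noncomputable instance (A V : Type*) [CommRing A] [AddCommGroup V] [Module A V] :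
    Algebra A (SymCAlg A V) := inferInstanceAs (Algebra A (RingQuot (symCRel A V)))

/-- The canonical projection `μ_S : T(V) → S(V)` as an `A`-linear map. -/
noncomputable def muS (A V : Type*) [CommRing A] [AddCommGroup V] [Module A V] :
    TensorAlgebra A V →ₗ[A] SymCAlg A V :=
  (RingQuot.mkAlgHom A (symCRel A V)).toLinearMap

/-- The set `Υ₀` of nonincreasing index sequences in `{0, ..., 2ν-1}`. -/
def NonincSeq (ν : ℕ) : Type :=
  {l : List (Fin (2 * ν)) // List.Pairwise (fun a b => b ≤ a) l}

/-- The ordered tensor monomial `e_I = e_{i₁} ⊗ ⋯ ⊗ e_{i_p} ∈ T(V)`. -/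
noncomputable def tensorMon (A V : Type*) [CommRing A] [AddCommGroup V] [Module A V]
    {ν : ℕ} (e : Fin (2 * ν) → V) (l : List (Fin (2 * ν))) : TensorAlgebra A V :=
  (l.map fun i => TensorAlgebra.ι A (e i)).prod

/-!
Both algebras are quotients of `T(V)` in which `e_i e_j = e_j e_i + β (e_i, e_j)` for an alternating
form `β` (`β = λ ω` for `W(V)`, `β = 0` for `S(V)`). On the polynomial ring `A[X_1, …, X_n]` the
operators `T_i = X_i + ∑_{j > i} β (e_i, e_j) ∂_j` satisfy the same relations, so the quotient acts
on it, and `t ↦ t • 1` sends the ordered monomial `e_{i_1} ⋯ e_{i_p}` (`i_1 ≥ ⋯ ≥ i_p`) to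
`X_{i_1} ⋯ X_{i_p}`. Conversely, let `Φ` send `X^γ` to the ordered monomial of exponent `γ`. Moving
`e_i` past the larger generators with the relations shows, by induction on the degree, that
`Φ ∘ T_i = e_i * Φ`; hence `Φ (t • 1) = t`, and `t ↦ t • 1` is a linear isomorphism onto `A[X]`
mapping the ordered monomials to the monomials.
-/

open MvPolynomial

theorem Finsupp.forall_lt_eq_zero_or_exists_eq_add_single {σ : Type*} [LinearOrder σ]
    (γ : σ →₀ ℕ) (i : σ) : (∀ j, i < j → γ j = 0) ∨
      ∃ j δ, i < j ∧ (∀ m, j < m → δ m = 0) ∧ γ = δ + Finsupp.single j 1 := by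
  refine or_iff_not_imp_left.mpr fun h => ?_
  obtain ⟨m, him, hm⟩ : ∃ m, i < m ∧ γ m ≠ 0 := by simpa using h
  set j := γ.support.max' ⟨m, Finsupp.mem_support_iff.mpr hm⟩
  have hj : γ j ≠ 0 := Finsupp.mem_support_iff.mp (Finset.max'_mem _ _)
  have hγ : ∀ n, j < n → γ n = 0 := fun n hn => by
    by_contra hn'
    exact (Finset.le_max' _ n (Finsupp.mem_support_iff.mpr hn')).not_gt hn
  refine ⟨j, γ - Finsupp.single j 1, him.trans_le (Finset.le_max' _ _ (by simpa)),
    fun n hn => by simp [hγ n hn], ?_⟩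
  exact (tsub_add_cancel_of_le (Finsupp.single_le_iff.mpr (Nat.one_le_iff_ne_zero.mpr hj))).symm

theorem Finsupp.degree_tsub_single_lt {σ : Type*} {δ : σ →₀ ℕ} {m : σ} (hm : δ m ≠ 0) :
    (δ - Finsupp.single m 1).degree < δ.degree := by
  conv_rhs =>
    rw [← tsub_add_cancel_of_le (Finsupp.single_le_iff.mpr (Nat.one_le_iff_ne_zero.mpr hm))]
  simp

section DescendingLists

variable {σ : Type*} [LinearOrder σ]

noncomputable def descListEquiv : {l : List σ // l.Pairwise (fun a b => b ≤ a)} ≃ (σ →₀ ℕ) where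
  toFun l := Multiset.toFinsupp (l.1 : Multiset σ)
  invFun γ := ⟨(Finsupp.toMultiset γ).sort (fun a b => b ≤ a), Multiset.pairwise_sort _ _⟩
  left_inv l := Subtype.ext <| List.Perm.eq_of_pairwise' (Multiset.pairwise_sort _ _) l.2 <| by
    rw [← Multiset.coe_eq_coe, Multiset.sort_eq, Multiset.toFinsupp_toMultiset]
  right_inv γ := by simp

theorem descListEquiv_apply (l : {l : List σ // l.Pairwise (fun a b => b ≤ a)}) (j : σ) :
    descListEquiv l j = l.1.count j := by
  simp [descListEquiv]

theorem descListEquiv_cons (i : σ) (l : List σ) (hl : (i :: l).Pairwise (fun a b => b ≤ a)) :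
    descListEquiv ⟨i :: l, hl⟩ = descListEquiv ⟨l, hl.of_cons⟩ + Finsupp.single i 1 := by
  simp [descListEquiv, ← Multiset.cons_coe, ← Multiset.singleton_add, add_comm]

theorem descListEquiv_symm_add_single {γ : σ →₀ ℕ} {i : σ} (h : ∀ j, i < j → γ j = 0) :
    (descListEquiv.symm (γ + Finsupp.single i 1)).1 = i :: (descListEquiv.symm γ).1 := by
  simp only [descListEquiv, Equiv.coe_fn_symm_mk, map_add, Finsupp.toMultiset_single, one_nsmul]
  rw [add_comm, Multiset.singleton_add, Multiset.sort_cons]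
  intro j hj
  by_contra! hij
  exact Finsupp.mem_support_iff.mp ((Finsupp.mem_toMultiset _ _).mp hj) (h j hij)

end DescendingLists

theorem MvPolynomial.pderiv_mul_mulLeft_X {R σ : Type*} [CommSemiring R] [DecidableEq σ]
    (j k : σ) :
    (pderiv (R := R) j).toLinearMap * LinearMap.mulLeft R (X k)
      = LinearMap.mulLeft R (X k) * (pderiv j).toLinearMap + if j = k then 1 else 0 := by
  refine LinearMap.ext fun p => ?_
  split_ifs with h <;> simp [pderiv_X, h, add_comm]

section PBWOperators

variable {A σ : Type*} [CommRing A]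

theorem MvPolynomial.commute_pderiv (j m : σ) :
    Commute (pderiv (R := A) (σ := σ) j).toLinearMap (pderiv m).toLinearMap := by
  classical
  have h : ⁅pderiv (R := A) (σ := σ) j, pderiv (R := A) m⁆ = 0 := derivation_ext fun k => by
    rw [Derivation.commutator_apply]
    simp [pderiv_X, Pi.single_apply, apply_ite]
  exact LinearMap.ext fun p => sub_eq_zero.mp congr($h p)

variable [LinearOrder σ] [Fintype σ]

noncomputable def pbwOp (b : σ → σ → A) (i : σ) : Module.End A (MvPolynomial σ A) :=
  LinearMap.mulLeft A (X i) + ∑ j with i < j, b i j • (pderiv j).toLinearMap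

theorem pbwOp_apply (b : σ → σ → A) (i : σ) (p : MvPolynomial σ A) :
    pbwOp b i p = X i * p + ∑ j with i < j, b i j • pderiv j p := by
  simp [pbwOp]

theorem pbwOp_monomial_of_le (b : σ → σ → A) {γ : σ →₀ ℕ} {i : σ} (h : ∀ j, i < j → γ j = 0) :
    pbwOp b i (monomial γ 1) = monomial (γ + Finsupp.single i 1) 1 := by
  rw [pbwOp_apply, X, monomial_mul, add_comm (Finsupp.single i 1), one_mul, add_eq_left]
  exact Finset.sum_eq_zero fun j hj => by simp [h j (Finset.mem_filter.mp hj).2]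

theorem pbwOp_mul_pbwOp {b : σ → σ → A} (hdiag : ∀ i, b i i = 0)
    (hskew : ∀ i j, b j i = -b i j) (i k : σ) :
    pbwOp b i * pbwOp b k = pbwOp b k * pbwOp b i + algebraMap A _ (b i k) := by
  set D : σ → Module.End A (MvPolynomial σ A) :=
    fun i => ∑ j with i < j, b i j • (pderiv j).toLinearMap
  have hXX : Commute (LinearMap.mulLeft A (X i : MvPolynomial σ A)) (LinearMap.mulLeft A (X k)) :=
    LinearMap.ext fun p => by simp [← mul_assoc, mul_comm (X i : MvPolynomial σ A)]
  have hDD : Commute (D i) (D k) :=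
    .sum_left _ _ _ fun j _ => .sum_right _ _ _ fun m _ =>
      ((commute_pderiv j m).smul_left _).smul_right _
  have hDX (i k : σ) : D i * LinearMap.mulLeft A (X k)
      = LinearMap.mulLeft A (X k) * D i + algebraMap A _ (if i < k then b i k else 0) := by
    simp only [D, Finset.sum_mul, Finset.mul_sum, smul_mul_assoc, mul_smul_comm,
      pderiv_mul_mulLeft_X, smul_add, Finset.sum_add_distrib]
    simp [Finset.sum_ite_eq', Algebra.algebraMap_eq_smul_one]
  have hc : (if i < k then b i k else 0) = b i k + if k < i then b k i else 0 := by
    rcases lt_trichotomy i k with h | rfl | h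
    · simp [h, h.not_gt]
    · simp [hdiag]
    · simp [h, h.not_gt, hskew i k]
  change (_ + D i) * (_ + D k) = (_ + D k) * (_ + D i) + _
  rw [add_mul, mul_add, mul_add, add_mul, mul_add, mul_add, hDX i k, hDX k i, hXX.eq, hDD.eq, hc,
    map_add]
  abel

end PBWOperators

section AbstractPBW

variable {A σ R : Type*} [CommRing A] [LinearOrder σ] [Semiring R] [Algebra A R]

noncomputable def orderedMonomialMap (g : σ → R) : MvPolynomial σ A →ₗ[A] R :=
  (basisMonomials σ A).constr A fun γ => ((descListEquiv.symm γ).1.map g).prod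

theorem orderedMonomialMap_monomial (g : σ → R) (γ : σ →₀ ℕ) :
    orderedMonomialMap g (monomial γ (1 : A)) = ((descListEquiv.symm γ).1.map g).prod := by
  have := (basisMonomials σ A).constr_basis A (fun γ => ((descListEquiv.symm γ).1.map g).prod) γ
  rwa [coe_basisMonomials] at this

theorem orderedMonomialMap_one (g : σ → R) : orderedMonomialMap (A := A) g 1 = 1 := by
  simpa [descListEquiv] using orderedMonomialMap_monomial (A := A) g 0

theorem orderedMonomialMap_monomial_add_single (g : σ → R) {γ : σ →₀ ℕ} {i : σ}
    (h : ∀ j, i < j → γ j = 0) :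
    orderedMonomialMap g (monomial (γ + Finsupp.single i 1) (1 : A))
      = g i * orderedMonomialMap g (monomial γ (1 : A)) := by
  simp [orderedMonomialMap_monomial, descListEquiv_symm_add_single h]

variable [Fintype σ] {b : σ → σ → A}

theorem orderedMonomialMap_pbwOp_monomial_of_le (g : σ → R) {γ : σ →₀ ℕ} {i : σ}
    (h : ∀ j, i < j → γ j = 0) :
    orderedMonomialMap g (pbwOp b i (monomial γ (1 : A)))
      = g i * orderedMonomialMap g (monomial γ (1 : A)) := by
  rw [pbwOp_monomial_of_le b h, orderedMonomialMap_monomial_add_single g h]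

variable {g : σ → R}

theorem orderedMonomialMap_pbwOp_monomial
    (hg : ∀ i j, g i * g j = g j * g i + algebraMap A R (b i j))
    (hT : ∀ i j, pbwOp b i * pbwOp b j = pbwOp b j * pbwOp b i + algebraMap A _ (b i j))
    (i : σ) (γ : σ →₀ ℕ) :
    orderedMonomialMap g (pbwOp b i (monomial γ (1 : A)))
      = g i * orderedMonomialMap g (monomial γ (1 : A)) := by
  induction hn : γ.degree using Nat.strong_induction_on generalizing γ i with | _ n ih => ?_
  obtain hγ | ⟨j, δ, hij, hδ, rfl⟩ := γ.forall_lt_eq_zero_or_exists_eq_add_single i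
  · exact orderedMonomialMap_pbwOp_monomial_of_le g hγ
  set Φ := orderedMonomialMap (A := A) g
  have hδn : δ.degree < n := by simp [← hn]
  -- `T_i X^δ` is `X^(δ + eᵢ)`, which has no index above `j`, plus terms of lower degree.
  have hstep : Φ (pbwOp b j (pbwOp b i (monomial δ 1))) = g j * Φ (pbwOp b i (monomial δ 1)) := by
    change pbwOp b i (monomial δ 1) ∈
      LinearMap.eqLocus (Φ ∘ₗ pbwOp b j) (LinearMap.mulLeft A (g j) ∘ₗ Φ)
    rw [pbwOp_apply]
    refine add_mem ?_ (Submodule.sum_mem _ fun m _ => Submodule.smul_mem _ _ ?_)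
    · have hδi : ∀ m, j < m → (δ + Finsupp.single i 1 : σ →₀ ℕ) m = 0 := fun m hm => by
        simp [hδ m hm, (hij.trans hm).ne']
      rw [X, monomial_mul, one_mul, add_comm]
      exact orderedMonomialMap_pbwOp_monomial_of_le g hδi
    · rw [pderiv_monomial, one_mul]
      rcases eq_or_ne (δ m) 0 with h0 | h0
      · simp [h0]
      rw [← mul_one (δ m : A), ← smul_eq_mul, ← smul_monomial]
      exact Submodule.smul_mem _ _ (ih _ ((Finsupp.degree_tsub_single_lt h0).trans hδn) j _ rfl)
  calc Φ (pbwOp b i (monomial (δ + Finsupp.single j 1) 1))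
      = Φ (pbwOp b i (pbwOp b j (monomial δ 1))) := by rw [pbwOp_monomial_of_le b hδ]
    _ = Φ (pbwOp b j (pbwOp b i (monomial δ 1))) + b i j • Φ (monomial δ 1) := by
        rw [← Module.End.mul_apply, hT, LinearMap.add_apply, map_add, Module.End.mul_apply,
          Module.algebraMap_end_apply, map_smul]
    _ = g j * (g i * Φ (monomial δ 1)) + b i j • Φ (monomial δ 1) := by
        rw [hstep, ih _ hδn i δ rfl]
    _ = g i * Φ (monomial (δ + Finsupp.single j 1) 1) := by
        rw [orderedMonomialMap_monomial_add_single g hδ, ← mul_assoc, ← mul_assoc, hg i j,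
          add_mul, Algebra.smul_def]

theorem orderedMonomialMap_comp_pbwOp
    (hg : ∀ i j, g i * g j = g j * g i + algebraMap A R (b i j))
    (hT : ∀ i j, pbwOp b i * pbwOp b j = pbwOp b j * pbwOp b i + algebraMap A _ (b i j))
    (i : σ) :
    orderedMonomialMap g ∘ₗ pbwOp b i = LinearMap.mulLeft A (g i) ∘ₗ orderedMonomialMap g :=
  (basisMonomials σ A).ext fun γ => by
    simpa using orderedMonomialMap_pbwOp_monomial hg hT i γ

variable (ρ : R →ₐ[A] Module.End A (MvPolynomial σ A))

theorem algHom_list_prod_apply_one (hρ : ∀ i, ρ (g i) = pbwOp b i) (l : List σ)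
    (hl : l.Pairwise (fun a b => b ≤ a)) :
    ρ (l.map g).prod 1 = monomial (descListEquiv ⟨l, hl⟩) 1 := by
  induction l with
  | nil => simp [descListEquiv]
  | cons i l ih =>
    have hle : ∀ j, i < j → descListEquiv ⟨l, hl.of_cons⟩ j = 0 := fun j hij => by
      rw [descListEquiv_apply, List.count_eq_zero]
      exact fun hj => (List.rel_of_pairwise_cons hl hj).not_gt hij
    rw [List.map_cons, List.prod_cons, map_mul, Module.End.mul_apply, ih hl.of_cons, hρ,
      pbwOp_monomial_of_le b hle, descListEquiv_cons]

theorem orderedMonomialMap_algHom_apply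
    (hg : ∀ i j, g i * g j = g j * g i + algebraMap A R (b i j))
    (hρ : ∀ i, ρ (g i) = pbwOp b i) (hgen : Algebra.adjoin A (Set.range g) = ⊤) (t : R)
    (q : MvPolynomial σ A) : orderedMonomialMap g (ρ t q) = t * orderedMonomialMap g q := by
  have hT (i j : σ) :
      pbwOp b i * pbwOp b j = pbwOp b j * pbwOp b i + algebraMap A _ (b i j) := by
    rw [← hρ, ← hρ, ← map_mul, hg, map_add, map_mul, AlgHom.commutes]
  have ht : t ∈ Algebra.adjoin A (Set.range g) := hgen ▸ Algebra.mem_top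
  induction ht using Algebra.adjoin_induction generalizing q with
  | mem x hx =>
    obtain ⟨i, rfl⟩ := hx
    rw [hρ]
    exact LinearMap.congr_fun (orderedMonomialMap_comp_pbwOp hg hT i) q
  | algebraMap a =>
    rw [AlgHom.commutes, Module.algebraMap_end_apply, map_smul, Algebra.smul_def]
  | add x y _ _ hx hy => simp [hx, hy, add_mul]
  | mul x y _ _ hx hy => rw [map_mul, Module.End.mul_apply, hx, hy, mul_assoc]

noncomputable def pbwEquiv (hg : ∀ i j, g i * g j = g j * g i + algebraMap A R (b i j))
    (hρ : ∀ i, ρ (g i) = pbwOp b i) (hgen : Algebra.adjoin A (Set.range g) = ⊤) :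
    R ≃ₗ[A] MvPolynomial σ A :=
  .ofLinearMap (LinearMap.applyₗ 1 ∘ₗ ρ.toLinearMap) (orderedMonomialMap g)
    ((basisMonomials σ A).ext fun γ => by
      simp [orderedMonomialMap_monomial,
        algHom_list_prod_apply_one ρ hρ _ (descListEquiv.symm γ).2])
    (LinearMap.ext fun t => by
      simp [orderedMonomialMap_algHom_apply ρ hg hρ hgen, orderedMonomialMap_one])

noncomputable def pbwBasis (hg : ∀ i j, g i * g j = g j * g i + algebraMap A R (b i j))
    (hρ : ∀ i, ρ (g i) = pbwOp b i) (hgen : Algebra.adjoin A (Set.range g) = ⊤) :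
    Module.Basis {l : List σ // l.Pairwise (fun a b => b ≤ a)} A R :=
  ((basisMonomials σ A).map (pbwEquiv ρ hg hρ hgen).symm).reindex descListEquiv.symm

theorem coe_pbwBasis (hg : ∀ i j, g i * g j = g j * g i + algebraMap A R (b i j))
    (hρ : ∀ i, ρ (g i) = pbwOp b i) (hgen : Algebra.adjoin A (Set.range g) = ⊤) :
    ⇑(pbwBasis ρ hg hρ hgen) = fun l => (l.1.map g).prod := by
  funext l
  simp [pbwBasis, pbwEquiv, orderedMonomialMap_monomial]

end AbstractPBW

theorem TensorAlgebra.adjoin_range_ι_comp_basis {A V ι : Type*} [CommSemiring A] [AddCommMonoid V]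
    [Module A V] (e : Module.Basis ι A V) :
    Algebra.adjoin A (Set.range (TensorAlgebra.ι A ∘ e)) = ⊤ := by
  rw [eq_top_iff, ← TensorAlgebra.adjoin_range_ι, Algebra.adjoin_le_iff]
  rintro _ ⟨x, rfl⟩
  induction e.mem_span x using Submodule.span_induction with
  | mem y hy =>
    obtain ⟨i, rfl⟩ := hy
    exact Algebra.subset_adjoin ⟨i, rfl⟩
  | zero => simp
  | add y z _ _ hy hz => simpa using add_mem hy hz
  | smul a y _ hy => simpa using Subalgebra.smul_mem _ hy a

section TensorAlgebraQuotients

open TensorAlgebra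

variable {A V σ : Type*} [CommRing A] [AddCommGroup V] [Module A V] [LinearOrder σ] [Fintype σ]

noncomputable def pbwRep (e : Module.Basis σ A V) (β : V →ₗ[A] V →ₗ[A] A) :
    TensorAlgebra A V →ₐ[A] Module.End A (MvPolynomial σ A) :=
  lift A (e.constr A (pbwOp fun i j => β (e i) (e j)))

theorem pbwRep_ι_basis (e : Module.Basis σ A V) (β : V →ₗ[A] V →ₗ[A] A) (i : σ) :
    pbwRep e β (ι A (e i)) = pbwOp (fun i j => β (e i) (e j)) i := by
  simp [pbwRep]

theorem pbwRep_ι_mul_ι (e : Module.Basis σ A V) {β : V →ₗ[A] V →ₗ[A] A} (hβ : β.IsAlt)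
    (x y : V) :
    pbwRep e β (ι A x * ι A y) = pbwRep e β (ι A y * ι A x) + algebraMap A _ (β x y) := by
  set τ := (pbwRep e β).toLinearMap ∘ₗ ι A
  have h := LinearMap.ext_basis e e (B := (LinearMap.mul A _).compl₁₂ τ τ)
    (B' := (LinearMap.mul A _).flip.compl₁₂ τ τ + β.compr₂ (Algebra.linearMap A _)) fun i j => by
      simpa [τ, pbwRep_ι_basis] using
        pbwOp_mul_pbwOp (b := fun i j => β (e i) (e j)) (fun _ => hβ.self_eq_zero _)
          (fun _ _ => (hβ.neg _ _).symm) i j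
  simpa [τ] using LinearMap.congr_fun₂ h x y

theorem linearIndependent_orderedMonomials_and_span_eq_top (e : Module.Basis σ A V)
    (β : V →ₗ[A] V →ₗ[A] A) (r : TensorAlgebra A V → TensorAlgebra A V → Prop)
    (hrel : ∀ x y, RingQuot.mkAlgHom A r (ι A x * ι A y)
      = RingQuot.mkAlgHom A r (ι A y * ι A x) + algebraMap A _ (β x y))
    (hlift : ∀ ⦃a b⦄, r a b → pbwRep e β a = pbwRep e β b) :
    LinearIndependent A (fun l : {l : List σ // l.Pairwise (fun a b => b ≤ a)} =>
        RingQuot.mkAlgHom A r (l.1.map fun i => ι A (e i)).prod) ∧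
    Submodule.span A (Set.range fun l : {l : List σ // l.Pairwise (fun a b => b ≤ a)} =>
        RingQuot.mkAlgHom A r (l.1.map fun i => ι A (e i)).prod) = ⊤ := by
  set g : σ → RingQuot r := fun i => RingQuot.mkAlgHom A r (ι A (e i))
  set ρ := RingQuot.liftAlgHom A ⟨pbwRep e β, hlift⟩
  have hg (i j : σ) : g i * g j = g j * g i + algebraMap A _ (β (e i) (e j)) := by
    simpa only [map_mul] using hrel (e i) (e j)
  have hρ (i : σ) : ρ (g i) = pbwOp (fun i j => β (e i) (e j)) i := by
    simp [ρ, g, pbwRep_ι_basis]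
  have hgen : Algebra.adjoin A (Set.range g) = ⊤ := by
    rw [show Set.range g = RingQuot.mkAlgHom A r '' Set.range (ι A ∘ e) by
        simp [g, ← Set.range_comp, Function.comp_def],
      Algebra.adjoin_image, adjoin_range_ι_comp_basis, Algebra.map_top,
      (AlgHom.range_eq_top _).mpr (RingQuot.mkAlgHom_surjective A r)]
  have hB := coe_pbwBasis ρ hg hρ hgen
  simp only [map_list_prod, List.map_map] at hB ⊢
  exact hB ▸ ⟨(pbwBasis ρ hg hρ hgen).linearIndependent, (pbwBasis ρ hg hρ hgen).span_eq⟩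

end TensorAlgebraQuotients

theorem weyl_pbw_basis_general
    (A V : Type*) [CommRing A] [AddCommGroup V] [Module A V]
    (ν : ℕ) (e : Module.Basis (Fin (2 * ν)) A V)
    (ω : V →ₗ[A] V →ₗ[A] A) (lam : A)
    (halt : ∀ x : V, ω x x = 0) :
    (LinearIndependent A fun I : NonincSeq ν =>
        muW A V ω lam (tensorMon A V e I.val)) ∧
    (Submodule.span A
        (Set.range fun I : NonincSeq ν => muW A V ω lam (tensorMon A V e I.val)) = ⊤) ∧
    (LinearIndependent A fun I : NonincSeq ν => muS A V (tensorMon A V e I.val)) ∧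
    (Submodule.span A
        (Set.range fun I : NonincSeq ν => muS A V (tensorMon A V e I.val)) = ⊤) := by
  have hW := linearIndependent_orderedMonomials_and_span_eq_top e (lam • ω) (weylRel A V ω lam)
    (fun x y => by
      have h := RingQuot.mkAlgHom_rel A (s := weylRel A V ω lam) ⟨x, y, rfl, rfl⟩
      rw [map_sub, sub_eq_iff_eq_add', AlgHom.commutes] at h
      simpa using h)
    (by
      rintro _ _ ⟨x, y, rfl, rfl⟩
      rw [map_sub, pbwRep_ι_mul_ι e (fun x => by simp [halt x]), add_sub_cancel_left,
        AlgHom.commutes]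
      simp)
  have hS := linearIndependent_orderedMonomials_and_span_eq_top e 0 (symCRel A V)
    (fun x y => by simpa using RingQuot.mkAlgHom_rel A (s := symCRel A V) ⟨x, y, rfl, rfl⟩)
    (by
      rintro _ _ ⟨x, y, rfl, rfl⟩
      simpa using pbwRep_ι_mul_ι e (β := 0) (fun _ => rfl) x y)
  exact ⟨hW.1, hW.2, hS.1, hS.2⟩

/-- Poincaré–Birkhoff–Witt: let `V` be free of rank `2ν` over `A` with a
nondegenerate alternating form `ω` and a basis `e` adapted to a Lagrangian splitting
`V = L ⊕ L'` (the first `ν` vectors span the Lagrangian `L`, the last `ν` span the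
Lagrangian `L'`).  Then the images `μ_W(e_I)`, `I ∈ Υ₀`, of the ordered monomials form
an `A`-basis of the Weyl algebra `W(V)`, and the images `μ_S(e_I)` form an `A`-basis of
the symmetric algebra `S(V)`. -/
theorem weyl_pbw_basis
    (A V : Type*) [CommRing A] [AddCommGroup V] [Module A V]
    (ν : ℕ) (e : Module.Basis (Fin (2 * ν)) A V)
    (ω : V →ₗ[A] V →ₗ[A] A) (lam : A)
    (halt : ∀ x : V, ω x x = 0)
    (hnondeg : ∀ x : V, (∀ y : V, ω x y = 0) → x = 0)
    (hL : ∀ i j : Fin (2 * ν), (i : ℕ) < ν → (j : ℕ) < ν → ω (e i) (e j) = 0)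
    (hL' : ∀ i j : Fin (2 * ν), ν ≤ (i : ℕ) → ν ≤ (j : ℕ) → ω (e i) (e j) = 0) :
    (LinearIndependent A fun I : NonincSeq ν =>
        muW A V ω lam (tensorMon A V e I.val)) ∧
    (Submodule.span A
        (Set.range fun I : NonincSeq ν => muW A V ω lam (tensorMon A V e I.val)) = ⊤) ∧
    (LinearIndependent A fun I : NonincSeq ν => muS A V (tensorMon A V e I.val)) ∧
    (Submodule.span A
        (Set.range fun I : NonincSeq ν => muS A V (tensorMon A V e I.val)) = ⊤) :=
  weyl_pbw_basis_general A V ν e ω lam halt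
end

section
/- In the setting of the PBW theorem for the Weyl algebra: let S̃(V) ⊆ T(V) be the A-submodule spanned by {e_I : I ∈ Υ₀} (ordered monomials in a symplectic basis adapted to a Lagrangian splitting). Then T(V) decomposes as a direct sum of A-modules: T(V) = S̃(V) ⊕ I_W, where I_W is the two-sided ideal generated by the Weyl relations x⊗y − y⊗x − λω(x,y). -/
/-- The submodule `S̃(V) ⊆ T(V)` spanned by the ordered monomials `e_I`, `I ∈ Υ₀`. -/
noncomputable def orderedMonSpan (A V : Type*) [CommRing A] [AddCommGroup V] [Module A V]
    {ν : ℕ} (e : Fin (2 * ν) → V) : Submodule A (TensorAlgebra A V) :=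
  Submodule.span A
    {z | ∃ l : List (Fin (2 * ν)), List.Pairwise (fun a b => b ≤ a) l ∧
      z = tensorMon A V e l}

/-- The two-sided ideal `I_W ⊆ T(V)` generated by the Weyl relations
`x ⊗ y − y ⊗ x − λ ω(x,y)`, as an `A`-submodule. -/
noncomputable def weylIdeal (A V : Type*) [CommRing A] [AddCommGroup V] [Module A V]
    (ω : V →ₗ[A] V →ₗ[A] A) (lam : A) : Submodule A (TensorAlgebra A V) :=
  Submodule.span A
    {z | ∃ (a b : TensorAlgebra A V) (x y : V),
      z = a * (TensorAlgebra.ι A x * TensorAlgebra.ι A y -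
        TensorAlgebra.ι A y * TensorAlgebra.ι A x -
        algebraMap A (TensorAlgebra A V) (lam * ω x y)) * b}

/-!
Multiplying an ordered monomial `e_I` on the left by `e_i` and moving `e_i` to its place with
the Weyl relations `e_i e_j = e_j e_i + λ ω(e_i, e_j)` writes `e_i e_I` as a combination of
ordered monomials modulo `I_W`, so the ordered monomials span `T(V)` modulo `I_W`.
They are independent modulo `I_W` by the classical PBW argument: the same straightening rule
defines operators `ρ(e_i)` on the free module on nonincreasing words, and because `ω` is
alternating they satisfy `ρ(x) ρ(y) - ρ(y) ρ(x) = λ ω(x, y)`. Hence `T(V)` acts on that module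
with `I_W` acting by zero, while `e_I` sends the empty word to the word `I`.
-/

open Finsupp

namespace WeylPBW

variable {ι A : Type*} [CommRing A]

section TensorMonomial

variable {V : Type*} [AddCommGroup V] [Module A V]

variable (A) in
noncomputable def tensorMonomial (v : ι → V) (l : List ι) : TensorAlgebra A V :=
  (l.map fun i => TensorAlgebra.ι A (v i)).prod

theorem tensorMonomial_nil (v : ι → V) : tensorMonomial A v [] = 1 := rfl

theorem tensorMonomial_cons (v : ι → V) (i : ι) (l : List ι) :
    tensorMonomial A v (i :: l) = TensorAlgebra.ι A (v i) * tensorMonomial A v l := by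
  simp [tensorMonomial]

variable (A) in
noncomputable def sortedMonomialSpan [LinearOrder ι] (v : ι → V) :
    Submodule A (TensorAlgebra A V) :=
  Submodule.span A (tensorMonomial A v '' {l | l.IsChain (· ≥ ·)})

theorem mul_mem_weylIdeal {ω : V →ₗ[A] V →ₗ[A] A} {lam : A} (c : TensorAlgebra A V)
    {z : TensorAlgebra A V} (hz : z ∈ weylIdeal A V ω lam) : c * z ∈ weylIdeal A V ω lam := by
  induction hz using Submodule.span_induction with
  | mem z hz =>
    obtain ⟨a, b, x, y, rfl⟩ := hz
    exact Submodule.subset_span ⟨c * a, b, x, y, by simp only [mul_assoc]⟩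
  | zero => rw [mul_zero]; exact Submodule.zero_mem _
  | add x y _ _ hx hy => rw [mul_add]; exact Submodule.add_mem _ hx hy
  | smul a x _ hx => rw [mul_smul_comm]; exact Submodule.smul_mem _ _ hx

end TensorMonomial

variable [LinearOrder ι]

section Straighten

variable (r : ι → ι → A)

/-- Normal form of `x i * x l`, for `l` nonincreasing, in the algebra with relations
`x i * x j - x j * x i = r i j`: the letter `i` moves right past every larger letter. -/
noncomputable def straighten (i : ι) : List ι → (List ι →₀ A)
  | [] => single [i] 1
  | j :: t => if j ≤ i then single (i :: j :: t) 1
      else mapDomain (j :: ·) (straighten i t) + r i j • single t 1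

variable {r}

theorem straighten_nil (i : ι) : straighten r i [] = single [i] 1 := rfl

theorem straighten_cons_of_le {i j : ι} (t : List ι) (h : j ≤ i) :
    straighten r i (j :: t) = single (i :: j :: t) 1 := by
  simp [straighten, h]

theorem straighten_cons_of_lt {i j : ι} (t : List ι) (h : i < j) :
    straighten r i (j :: t) = mapDomain (j :: ·) (straighten r i t) + r i j • single t 1 := by
  simp [straighten, not_le.mpr h]

theorem straighten_of_isChain {i : ι} {l : List ι} (h : (i :: l).IsChain (· ≥ ·)) :
    straighten r i l = single (i :: l) 1 := by
  cases l with
  | nil => rfl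
  | cons j t => exact straighten_cons_of_le t (List.isChain_cons_cons.mp h).1

theorem isChain_of_mem_support_straighten {i b : ι} (hib : i ≤ b) :
    ∀ {l m : List ι}, (b :: l).IsChain (· ≥ ·) → m ∈ (straighten r i l).support →
      (b :: m).IsChain (· ≥ ·)
  | [], m, _, hm => by
    rw [straighten_nil, mem_support_single] at hm
    simpa [hm.1] using hib
  | j :: t, m, hl, hm => by
    obtain ⟨hjb, hjt⟩ := List.isChain_cons_cons.mp hl
    rcases le_or_gt j i with hji | hij
    · rw [straighten_cons_of_le t hji, mem_support_single] at hm
      simpa [hm.1] using ⟨hib, hji, hjt⟩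
    · rw [straighten_cons_of_lt t hij] at hm
      rcases Finset.mem_union.mp (support_add hm) with hm | hm
      · obtain ⟨m', hm', rfl⟩ := Finset.mem_image.mp (mapDomain_support hm)
        exact List.isChain_cons_cons.mpr ⟨hjb, isChain_of_mem_support_straighten hij.le hjt hm'⟩
      · obtain rfl := Finset.mem_singleton.mp (support_single_subset (support_smul hm))
        exact hjt.imp_head fun hz => hz.trans hjb

variable (ι A) in
abbrev supportedNonincreasing : Submodule A (List ι →₀ A) :=
  supported A A {l : List ι | l.IsChain (· ≥ ·)}

-- Instance search does not find this ring structure through the submodule coercion.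
noncomputable instance : Ring (Module.End A (supportedNonincreasing ι A)) :=
  @Module.End.instRing A _ _ (Submodule.addCommGroup _) _

theorem straighten_mem_supportedNonincreasing (i : ι) {l : List ι} (hl : l.IsChain (· ≥ ·)) :
    straighten r i l ∈ supportedNonincreasing ι A := by
  intro m hm
  cases l with
  | nil => exact (isChain_of_mem_support_straighten le_rfl (List.isChain_singleton i) hm).of_cons
  | cons j t =>
    refine (isChain_of_mem_support_straighten (le_max_left i j) ?_ hm).of_cons
    exact List.isChain_cons_cons.mpr ⟨le_max_right i j, hl⟩

variable (r) in
noncomputable def straightenOp (i : ι) : Module.End A (List ι →₀ A) :=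
  linearCombination A (straighten r i)

theorem straightenOp_single (i : ι) (l : List ι) (c : A) :
    straightenOp r i (single l c) = c • straighten r i l :=
  linearCombination_single A c l

theorem straightenOp_mapDomain_of_le {i k : ι} (h : k ≤ i) (u : List ι →₀ A) :
    straightenOp r i (mapDomain (k :: ·) u) = mapDomain (fun m => i :: k :: m) u := by
  induction u using Finsupp.induction_linear with
  | zero => simp
  | add f g hf hg => simp only [mapDomain_add, map_add, hf, hg]
  | single l c =>
    rw [mapDomain_single, straightenOp_single, straighten_cons_of_le _ h, mapDomain_single,
      smul_single_one]

theorem straightenOp_mapDomain_of_lt {i k : ι} (h : i < k) (u : List ι →₀ A) :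
    straightenOp r i (mapDomain (k :: ·) u) =
      mapDomain (k :: ·) (straightenOp r i u) + r i k • u := by
  induction u using Finsupp.induction_linear with
  | zero => simp
  | add f g hf hg =>
    simp only [mapDomain_add, map_add, hf, hg, smul_add]
    abel
  | single l c =>
    rw [mapDomain_single, straightenOp_single, straighten_cons_of_lt _ h, straightenOp_single,
      smul_add, mapDomain_smul, smul_single_one, smul_single, smul_single, smul_eq_mul,
      smul_eq_mul, mul_comm]

theorem straightenOp_straighten_comm_of_lt (hr : ∀ a b, r a b + r b a = 0) {i j : ι}
    (hji : j < i) {l : List ι} (hl : l.IsChain (· ≥ ·)) :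
    straightenOp r i (straighten r j l) =
      straightenOp r j (straighten r i l) + r i j • single l 1 := by
  have hcancel (u : List ι →₀ A) : r j i • u + r i j • u = 0 := by
    rw [← add_smul, hr, zero_smul]
  induction l with
  | nil =>
    rw [straighten_nil, straighten_nil, straightenOp_single, straightenOp_single, one_smul,
      one_smul, straighten_cons_of_le _ hji.le, straighten_cons_of_lt _ hji, straighten_nil,
      mapDomain_single, add_assoc, hcancel, add_zero]
  | cons k t ih =>
    rcases le_or_gt k j with hkj | hjk
    · rw [straighten_cons_of_le _ hkj, straighten_cons_of_le _ (hkj.trans hji.le),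
        straightenOp_single, straightenOp_single, one_smul, one_smul,
        straighten_cons_of_le _ hji.le, straighten_cons_of_lt _ hji, straighten_cons_of_le _ hkj,
        mapDomain_single, add_assoc, hcancel, add_zero]
    rcases le_or_gt k i with hki | hik
    · simp only [straighten_cons_of_lt _ hjk, straighten_cons_of_le _ hki, map_add, map_smul,
        straightenOp_mapDomain_of_le hki, straightenOp_single, one_smul,
        straighten_cons_of_lt _ hji, mapDomain_add, mapDomain_smul, mapDomain_single,
        ← mapDomain_comp, straighten_of_isChain (hl.imp_head fun hz => hz.trans hki),
        Function.comp_def]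
      rw [add_assoc, hcancel, add_zero]
    · simp only [straighten_cons_of_lt _ (hji.trans hik), straighten_cons_of_lt _ hik, map_add,
        map_smul, straightenOp_mapDomain_of_lt hik, straightenOp_mapDomain_of_lt (hji.trans hik),
        straightenOp_single, one_smul, ih hl.of_cons, mapDomain_add, mapDomain_smul,
        mapDomain_single]
      abel

theorem straightenOp_straighten_comm (hr₀ : ∀ a, r a a = 0) (hr : ∀ a b, r a b + r b a = 0)
    (i j : ι) {l : List ι} (hl : l.IsChain (· ≥ ·)) :
    straightenOp r i (straighten r j l) =
      straightenOp r j (straighten r i l) + r i j • single l 1 := by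
  rcases lt_trichotomy j i with hji | rfl | hij
  · exact straightenOp_straighten_comm_of_lt hr hji hl
  · rw [hr₀, zero_smul, add_zero]
  · rw [straightenOp_straighten_comm_of_lt hr hij hl, add_assoc, ← add_smul, add_comm (r j i),
      hr, zero_smul, add_zero]

theorem straightenOp_mem_supportedNonincreasing (i : ι) {u : List ι →₀ A}
    (hu : u ∈ supportedNonincreasing ι A) : straightenOp r i u ∈ supportedNonincreasing ι A :=
  Submodule.finsuppSum_mem _ _ _ _ fun _ hl =>
    Submodule.smul_mem _ _ (straighten_mem_supportedNonincreasing i (hu (mem_support_iff.mpr hl)))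

variable (r) in
noncomputable def sortedOp (i : ι) : Module.End A (supportedNonincreasing ι A) :=
  (straightenOp r i).restrict fun _ => straightenOp_mem_supportedNonincreasing i

theorem sortedOp_mul_sortedOp (hr₀ : ∀ a, r a a = 0) (hr : ∀ a b, r a b + r b a = 0)
    (i j : ι) :
    sortedOp r i * sortedOp r j = sortedOp r j * sortedOp r i + algebraMap A _ (r i j) := by
  ext ⟨u, hu⟩ : 2
  simp only [Module.End.mul_apply, LinearMap.add_apply, Module.algebraMap_end_apply,
    Submodule.coe_add, Submodule.coe_smul, sortedOp, LinearMap.coe_restrict_apply]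
  rw [supportedNonincreasing, supported_eq_span_single] at hu
  induction hu using Submodule.span_induction with
  | mem x hx =>
    obtain ⟨l, hl, rfl⟩ := hx
    simp only [straightenOp_single, one_smul]
    exact straightenOp_straighten_comm hr₀ hr i j hl
  | zero => simp
  | add x y _ _ hx hy =>
    simp only [map_add, hx, hy, smul_add]
    abel
  | smul a x _ hx => simp only [map_smul, hx, smul_add, smul_comm a]

end Straighten

section Representation

variable {V : Type*} [AddCommGroup V] [Module A V] (e : Module.Basis ι A V)
  (ω : V →ₗ[A] V →ₗ[A] A) (lam : A)

noncomputable def weylOp : V →ₗ[A] Module.End A (supportedNonincreasing ι A) :=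
  e.constr A (sortedOp fun i j => lam * ω (e i) (e j))

variable {ω} in
theorem weylOp_mul_weylOp (hω : ω.IsAlt) (x y : V) :
    weylOp e ω lam x * weylOp e ω lam y =
      weylOp e ω lam y * weylOp e ω lam x + algebraMap A _ (lam * ω x y) := by
  have := LinearMap.ext_basis e e
    (B := (LinearMap.mul A (Module.End A (supportedNonincreasing ι A))).compl₁₂
      (weylOp e ω lam) (weylOp e ω lam))
    (B' := (LinearMap.mul A _).flip.compl₁₂ (weylOp e ω lam) (weylOp e ω lam) +
      (lam • ω).compr₂ (Algebra.linearMap A _)) fun i j => by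
    simp only [LinearMap.compl₁₂_apply, LinearMap.add_apply, LinearMap.flip_apply,
      LinearMap.mul_apply', LinearMap.compr₂_apply, weylOp, Module.Basis.constr_basis,
      Algebra.linearMap_apply, LinearMap.smul_apply, smul_eq_mul]
    refine sortedOp_mul_sortedOp (fun a => by simp [hω.self_eq_zero]) (fun a b => ?_) i j
    rw [← mul_add, ← hω.neg, neg_add_cancel, mul_zero]
  simpa using LinearMap.congr_fun₂ this x y

noncomputable def weylRep : TensorAlgebra A V →ₐ[A] Module.End A (supportedNonincreasing ι A) :=
  TensorAlgebra.lift A (weylOp e ω lam)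

theorem weylRep_ι_basis (i : ι) :
    weylRep e ω lam (TensorAlgebra.ι A (e i)) = sortedOp (fun i j => lam * ω (e i) (e j)) i := by
  rw [weylRep, TensorAlgebra.lift_ι_apply, weylOp, Module.Basis.constr_basis]

variable {ω} in
theorem weylRep_eq_zero_of_mem_weylIdeal (hω : ω.IsAlt) {z : TensorAlgebra A V}
    (hz : z ∈ weylIdeal A V ω lam) : weylRep e ω lam z = 0 := by
  induction hz using Submodule.span_induction with
  | mem z hz =>
    obtain ⟨a, b, x, y, rfl⟩ := hz
    rw [map_mul, map_mul, map_sub, map_sub, map_mul, map_mul, AlgHom.commutes, weylRep,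
      TensorAlgebra.lift_ι_apply, TensorAlgebra.lift_ι_apply, weylOp_mul_weylOp e lam hω,
      add_sub_cancel_left, sub_self, mul_zero, zero_mul]
  | zero => exact map_zero _
  | add x y _ _ hx hy => rw [map_add, hx, hy, add_zero]
  | smul a x _ hx => rw [map_smul, hx, smul_zero]

variable (ι A) in
noncomputable def vacuum : supportedNonincreasing ι A :=
  ⟨single [] 1, single_mem_supported A 1 List.isChain_nil⟩

theorem weylRep_tensorMonomial_vacuum {l : List ι} (hl : l.IsChain (· ≥ ·)) :
    (weylRep e ω lam (tensorMonomial A e l) (vacuum ι A) : List ι →₀ A) = single l 1 := by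
  induction l with
  | nil => rw [tensorMonomial_nil, map_one]; rfl
  | cons i t ih =>
    rw [tensorMonomial_cons, map_mul, Module.End.mul_apply, weylRep_ι_basis, sortedOp,
      LinearMap.coe_restrict_apply, ih hl.of_cons, straightenOp_single, one_smul,
      straighten_of_isChain hl]

theorem weylRep_linearCombination_vacuum {c : List ι →₀ A} (hc : c ∈ supportedNonincreasing ι A) :
    (weylRep e ω lam (linearCombination A (tensorMonomial A e) c) (vacuum ι A) :
      List ι →₀ A) = c := by
  rw [supportedNonincreasing, supported_eq_span_single] at hc
  induction hc using Submodule.span_induction with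
  | mem x hx =>
    obtain ⟨l, hl, rfl⟩ := hx
    rw [linearCombination_single, one_smul, weylRep_tensorMonomial_vacuum e ω lam hl]
  | zero => simp
  | add x y _ _ hx hy => simp only [map_add, LinearMap.add_apply, Submodule.coe_add, hx, hy]
  | smul a x _ hx => simp only [map_smul, LinearMap.smul_apply, Submodule.coe_smul, hx]

variable {ω} in
theorem disjoint_sortedMonomialSpan_weylIdeal (hω : ω.IsAlt) :
    Disjoint (sortedMonomialSpan A e) (weylIdeal A V ω lam) := by
  rw [Submodule.disjoint_def]
  intro x hxS hxW
  obtain ⟨c, hc, rfl⟩ := (mem_span_image_iff_linearCombination A).mp hxS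
  have hc0 := weylRep_linearCombination_vacuum e ω lam hc
  rw [weylRep_eq_zero_of_mem_weylIdeal e lam hω hxW, LinearMap.zero_apply,
    ZeroMemClass.coe_zero] at hc0
  rw [← hc0, map_zero]

end Representation

section Straightening

variable {V : Type*} [AddCommGroup V] [Module A V] (ω : V →ₗ[A] V →ₗ[A] A) (lam : A)

theorem ι_mul_tensorMonomial_sub_mem_weylIdeal (v : ι → V) (i : ι) (l : List ι) :
    TensorAlgebra.ι A (v i) * tensorMonomial A v l -
        linearCombination A (tensorMonomial A v) (straighten (fun i j => lam * ω (v i) (v j)) i l)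
      ∈ weylIdeal A V ω lam := by
  induction l with
  | nil =>
    rw [straighten_nil, linearCombination_single, one_smul, tensorMonomial_cons, sub_self]
    exact Submodule.zero_mem _
  | cons j t ih =>
    rcases le_or_gt j i with hji | hij
    · rw [straighten_cons_of_le t hji, linearCombination_single, one_smul,
        ← tensorMonomial_cons, sub_self]
      exact Submodule.zero_mem _
    have hcons : linearCombination A (tensorMonomial A v ∘ (j :: ·)) =
        LinearMap.mulLeft A (TensorAlgebra.ι A (v j)) ∘ₗ
          linearCombination A (tensorMonomial A v) := by
      ext m
      simp [tensorMonomial_cons]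
    have hmem := Submodule.add_mem _ (mul_mem_weylIdeal (TensorAlgebra.ι A (v j)) ih)
      (Submodule.subset_span ⟨1, tensorMonomial A v t, v i, v j, rfl⟩)
    convert hmem using 1
    rw [straighten_cons_of_lt t hij, map_add, map_smul, linearCombination_mapDomain, hcons]
    simp only [tensorMonomial_cons, LinearMap.comp_apply, LinearMap.mulLeft_apply,
      linearCombination_single, Algebra.smul_def, map_one, one_mul]
    noncomm_ring

theorem ι_mul_mem_sortedMonomialSpan_sup_weylIdeal (v : ι → V) (i : ι) {s : TensorAlgebra A V}
    (hs : s ∈ sortedMonomialSpan A v) :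
    TensorAlgebra.ι A (v i) * s ∈ sortedMonomialSpan A v ⊔ weylIdeal A V ω lam := by
  induction hs using Submodule.span_induction with
  | mem s hs =>
    obtain ⟨l, hl, rfl⟩ := hs
    rw [← add_sub_cancel (linearCombination A (tensorMonomial A v)
      (straighten (fun i j => lam * ω (v i) (v j)) i l)) (TensorAlgebra.ι A (v i) * _)]
    refine Submodule.add_mem_sup ?_ (ι_mul_tensorMonomial_sub_mem_weylIdeal ω lam v i l)
    exact (mem_span_image_iff_linearCombination A).mpr
      ⟨_, straighten_mem_supportedNonincreasing i hl, rfl⟩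
  | zero => rw [mul_zero]; exact Submodule.zero_mem _
  | add x y _ _ hx hy => rw [mul_add]; exact Submodule.add_mem _ hx hy
  | smul a x _ hx => rw [mul_smul_comm]; exact Submodule.smul_mem _ _ hx

theorem mul_mem_sortedMonomialSpan_sup_weylIdeal (e : Module.Basis ι A V) (z : TensorAlgebra A V)
    {m : TensorAlgebra A V} (hm : m ∈ sortedMonomialSpan A e ⊔ weylIdeal A V ω lam) :
    z * m ∈ sortedMonomialSpan A e ⊔ weylIdeal A V ω lam := by
  induction z using TensorAlgebra.induction generalizing m with
  | algebraMap a => rw [← Algebra.smul_def]; exact Submodule.smul_mem _ _ hm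
  | ι x =>
    induction e.mem_span x using Submodule.span_induction with
    | mem x hx =>
      obtain ⟨i, rfl⟩ := hx
      obtain ⟨s, hs, w, hw, rfl⟩ := Submodule.mem_sup.mp hm
      rw [mul_add]
      exact Submodule.add_mem _ (ι_mul_mem_sortedMonomialSpan_sup_weylIdeal ω lam e i hs)
        (Submodule.mem_sup_right (mul_mem_weylIdeal _ hw))
    | zero => rw [map_zero, zero_mul]; exact Submodule.zero_mem _
    | add x y _ _ hx hy => rw [map_add, add_mul]; exact Submodule.add_mem _ hx hy
    | smul a x _ hx => rw [map_smul, smul_mul_assoc]; exact Submodule.smul_mem _ _ hx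
  | mul a b ha hb => rw [mul_assoc]; exact ha (hb hm)
  | add a b ha hb => rw [add_mul]; exact Submodule.add_mem _ (ha hm) (hb hm)

theorem codisjoint_sortedMonomialSpan_weylIdeal (e : Module.Basis ι A V) :
    Codisjoint (sortedMonomialSpan A e) (weylIdeal A V ω lam) := by
  rw [codisjoint_iff, eq_top_iff]
  intro z _
  rw [← mul_one z]
  refine mul_mem_sortedMonomialSpan_sup_weylIdeal ω lam e z
    (Submodule.mem_sup_left (Submodule.subset_span ?_))
  exact ⟨[], List.isChain_nil, tensorMonomial_nil _⟩

end Straightening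

theorem isCompl_sortedMonomialSpan_weylIdeal {V : Type*} [AddCommGroup V] [Module A V]
    (e : Module.Basis ι A V) {ω : V →ₗ[A] V →ₗ[A] A} (hω : ω.IsAlt) (lam : A) :
    IsCompl (sortedMonomialSpan A e) (weylIdeal A V ω lam) :=
  ⟨disjoint_sortedMonomialSpan_weylIdeal e lam hω, codisjoint_sortedMonomialSpan_weylIdeal ω lam e⟩

end WeylPBW

theorem tensor_algebra_pbw_decomposition_general
    (A V : Type*) [CommRing A] [AddCommGroup V] [Module A V]
    (ν : ℕ) (e : Module.Basis (Fin (2 * ν)) A V)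
    (ω : V →ₗ[A] V →ₗ[A] A) (lam : A)
    (halt : ∀ x : V, ω x x = 0) :
    IsCompl (orderedMonSpan A V (e : Fin (2 * ν) → V)) (weylIdeal A V ω lam) := by
  have hspan : orderedMonSpan A V e = WeylPBW.sortedMonomialSpan A e := by
    rw [orderedMonSpan, WeylPBW.sortedMonomialSpan]
    congr 1
    ext z
    simp [List.isChain_iff_pairwise, eq_comm, tensorMon, WeylPBW.tensorMonomial]
  rw [hspan]
  exact WeylPBW.isCompl_sortedMonomialSpan_weylIdeal e halt lam

/-- in the setting of the PBW theorem for the Weyl algebra, the tensor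
algebra decomposes as a direct sum of `A`-modules `T(V) = S̃(V) ⊕ I_W`, where `S̃(V)` is
spanned by the ordered monomials in a basis adapted to a Lagrangian splitting and `I_W`
is the two-sided ideal generated by the Weyl relations. -/
theorem tensor_algebra_pbw_decomposition
    (A V : Type*) [CommRing A] [AddCommGroup V] [Module A V]
    (ν : ℕ) (e : Module.Basis (Fin (2 * ν)) A V)
    (ω : V →ₗ[A] V →ₗ[A] A) (lam : A)
    (halt : ∀ x : V, ω x x = 0)
    (hnondeg : ∀ x : V, (∀ y : V, ω x y = 0) → x = 0)
    (hL : ∀ i j : Fin (2 * ν), (i : ℕ) < ν → (j : ℕ) < ν → ω (e i) (e j) = 0)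
    (hL' : ∀ i j : Fin (2 * ν), ν ≤ (i : ℕ) → ν ≤ (j : ℕ) → ω (e i) (e j) = 0) :
    IsCompl (orderedMonSpan A V (e : Fin (2 * ν) → V)) (weylIdeal A V ω lam) :=
  tensor_algebra_pbw_decomposition_general A V ν e ω lam halt
end

section
/- Let V = L ⊕ L' be a symplectic A-module with Lagrangian summands, and let S̃₁(V) ⊆ T(V) be the span of ordered monomials e_I with I ∈ Υ₁ (nonincreasing sequences containing at least one index ≤ ν, i.e., at least one factor from L at the rightmost position). Let σ : W(V) → S(V) be the PBW isomorphism μ_S ∘ ι₁ ∘ (μ_W ∘ ι₁)⁻¹ restricted appropriately. Then σ identifies the left ideal I_L of W(V) generated by L with the ideal I_S^{(L)} of S(V) generated by L; equivalently, I_L = μ_W(S̃₁(V)) and I_S^{(L)} = μ_S(S̃₁(V)). -/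
/-- The submodule `S̃₁(V) ⊆ T(V)` spanned by the ordered monomials `e_I` with
`I ∈ Υ₁`, i.e. nonincreasing sequences containing at least one index `< ν`
(at least one factor from `L`). -/
noncomputable def orderedMonSpanOne (A V : Type*) [CommRing A] [AddCommGroup V]
    [Module A V] {ν : ℕ} (e : Fin (2 * ν) → V) : Submodule A (TensorAlgebra A V) :=
  Submodule.span A
    {z | ∃ l : List (Fin (2 * ν)), List.Pairwise (fun a b => b ≤ a) l ∧
      (∃ i ∈ l, (i : ℕ) < ν) ∧ z = tensorMon A V e l}

/-!
In both `W(V)` and `S(V)` the commutator of two vectors is a scalar, so the nonincreasing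
monomials in the basis span the algebra: moving a generator to its place only produces scalar
multiples of shorter monomials. Since `L` is Lagrangian its basis vectors commute, so multiplying
a nonincreasing monomial on the right by `e_i` with `i < ν` just inserts `i` at its place. Hence
the left ideal generated by `L` is spanned by the nonincreasing monomials containing an index
`< ν`; conversely such a monomial ends with its smallest index, which is `< ν`.
-/

open Submodule Set

section SortedMonomials

variable {A B ι : Type*} [CommRing A] [Ring B] [Algebra A B] [LinearOrder ι] (g : ι → B)

def sortedMonomials (s : Set ι) : Set B :=
  {x | ∃ l : List ι, l.Pairwise (· ≥ ·) ∧ (∀ k ∈ l, k ∈ s) ∧ x = (l.map g).prod}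

def sortedMonomialsMeeting (s : Set ι) : Set B :=
  {x | ∃ l : List ι, l.Pairwise (· ≥ ·) ∧ (∃ k ∈ l, k ∈ s) ∧ x = (l.map g).prod}

variable {g}

theorem sortedMonomials_mono {s t : Set ι} (hst : s ⊆ t) :
    sortedMonomials g s ⊆ sortedMonomials g t := by
  rintro _ ⟨l, hl, hls, rfl⟩
  exact ⟨l, hl, fun k hk => hst (hls k hk), rfl⟩

theorem mul_mem_span_sortedMonomials_Iic {j b : ι} (hjb : j ≤ b) {x : B}
    (hx : x ∈ span A (sortedMonomials g (Iic j))) :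
    g j * x ∈ span A (sortedMonomials g (Iic b)) := by
  have hmul : LinearMap.mulLeft A (g j) '' sortedMonomials g (Iic j) ⊆
      sortedMonomials g (Iic b) := by
    rintro _ ⟨_, ⟨m, hm, hmj, rfl⟩, rfl⟩
    refine ⟨j :: m, List.pairwise_cons.mpr ⟨hmj, hm⟩, ?_, by simp⟩
    simpa [hjb] using fun k hk => (hmj k hk).trans hjb
  exact span_mono hmul (map_span (LinearMap.mulLeft A (g j)) _ ▸ mem_map_of_mem hx)

/-- The bound `b` is the invariant that lets `g j` be put back in front after swapping it
with `g i`. -/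
theorem mul_prod_mem_span_sortedMonomials_Iic (c : ι → ι → A)
    (hcomm : ∀ i j, g i * g j = g j * g i + algebraMap A B (c i j))
    {l : List ι} (hl : l.Pairwise (· ≥ ·)) {i b : ι} (hib : i ≤ b) (hlb : ∀ k ∈ l, k ≤ b) :
    g i * (l.map g).prod ∈ span A (sortedMonomials g (Iic b)) := by
  induction l generalizing i b with
  | nil => exact subset_span ⟨[i], List.pairwise_singleton _ i, by simpa using hib, by simp⟩
  | cons j t ih =>
    obtain ⟨hjt, ht⟩ := List.pairwise_cons.mp hl
    have hjb : j ≤ b := hlb j List.mem_cons_self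
    by_cases hji : j ≤ i
    · refine subset_span ⟨i :: j :: t, List.pairwise_cons.mpr ⟨?_, hl⟩, ?_, by simp⟩
      · simpa [hji] using fun k hk => (hjt k hk).trans hji
      · simpa [hib] using hlb
    · have hswap : g i * ((j :: t).map g).prod =
          g j * (g i * (t.map g).prod) + c i j • (t.map g).prod := by
        rw [List.map_cons, List.prod_cons, ← mul_assoc, hcomm, add_mul, mul_assoc,
          Algebra.smul_def]
      rw [hswap]
      refine add_mem (mul_mem_span_sortedMonomials_Iic hjb (ih ht (not_le.mp hji).le hjt))
        (smul_mem _ _ (subset_span ⟨t, ht, fun k hk => (hjt k hk).trans hjb, rfl⟩))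

theorem span_sortedMonomials_eq_top (c : ι → ι → A)
    (hcomm : ∀ i j, g i * g j = g j * g i + algebraMap A B (c i j))
    (hgen : Algebra.adjoin A (range g) = ⊤) :
    span A (sortedMonomials g univ) = ⊤ := by
  set P := span A (sortedMonomials g univ)
  have hgP : ∀ i, ∀ x ∈ P, g i * x ∈ P := by
    intro i x hx
    induction hx using span_induction with
    | mem x hx =>
      obtain ⟨l, hl, -, rfl⟩ := hx
      rcases l with _ | ⟨j, t⟩
      · exact subset_span ⟨[i], List.pairwise_singleton _ i, by simp, by simp⟩
      · have hle : ∀ k ∈ j :: t, k ≤ max i j := by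
          simpa using fun k hk => ((List.pairwise_cons.mp hl).1 k hk).trans (le_max_right i j)
        exact span_mono (sortedMonomials_mono (subset_univ _))
          (mul_prod_mem_span_sortedMonomials_Iic c hcomm hl (le_max_left i j) hle)
    | zero => simp
    | add x y _ _ hx hy => simpa [mul_add] using add_mem hx hy
    | smul a x _ hx => simpa [mul_smul_comm] using smul_mem P a hx
  have hadjP : ∀ y ∈ Algebra.adjoin A (range g), ∀ x ∈ P, y * x ∈ P := by
    intro y hy
    induction hy using Algebra.adjoin_induction with
    | mem _ hy => obtain ⟨i, rfl⟩ := hy; exact hgP i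
    | algebraMap r => exact fun x hx => by simpa [Algebra.smul_def] using smul_mem P r hx
    | add y z _ _ hy hz => exact fun x hx => by simpa [add_mul] using add_mem (hy x hx) (hz x hx)
    | mul y z _ _ hy hz => exact fun x hx => by simpa [mul_assoc] using hy _ (hz x hx)
  have hone : (1 : B) ∈ P := subset_span ⟨[], List.Pairwise.nil, by simp, by simp⟩
  exact eq_top_iff'.mpr fun y => by simpa using hadjP y (hgen ▸ Algebra.mem_top) 1 hone

theorem prod_mul_eq_prod_orderedInsert {l : List ι} (hl : l.Pairwise (· ≥ ·)) {i : ι}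
    (hi : ∀ j ≤ i, Commute (g i) (g j)) :
    (l.map g).prod * g i = ((l.orderedInsert (· ≥ ·) i).map g).prod := by
  induction l with
  | nil => simp
  | cons j t ih =>
    obtain ⟨hjt, ht⟩ := List.pairwise_cons.mp hl
    by_cases hji : j ≤ i
    · have hcomm : Commute (g i) ((j :: t).map g).prod :=
        Commute.list_prod_right _ _ <| by
          simpa using ⟨hi j hji, fun k hk => hi k ((hjt k hk).trans hji)⟩
      simp only [List.orderedInsert_cons, ge_iff_le, hji, if_true]
      rw [List.map_cons (a := i), List.prod_cons, hcomm.eq]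
    · simp [List.orderedInsert_cons, hji, mul_assoc, ih ht]

theorem span_mul_eq_span_sortedMonomialsMeeting {s : Set ι} (hs : IsLowerSet s)
    (hcomm : ∀ i ∈ s, ∀ j ∈ s, Commute (g i) (g j))
    (htop : span A (sortedMonomials g univ) = ⊤) :
    span A {x | ∃ a : B, ∃ i ∈ s, x = a * g i} = span A (sortedMonomialsMeeting g s) := by
  apply le_antisymm
  · rw [span_le]
    rintro _ ⟨a, i, hi, rfl⟩
    have ha : a ∈ span A (sortedMonomials g univ) := htop ▸ mem_top
    induction ha using span_induction with
    | mem x hx =>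
      obtain ⟨l, hl, -, rfl⟩ := hx
      rw [prod_mul_eq_prod_orderedInsert hl fun j hj => hcomm i hi j (hs hj hi)]
      exact subset_span ⟨_, hl.orderedInsert i l,
        ⟨i, (List.mem_orderedInsert _).mpr (Or.inl rfl), hi⟩, rfl⟩
    | zero => simp
    | add x y _ _ hx hy => simpa [add_mul] using add_mem hx hy
    | smul r x _ hx => simpa [smul_mul_assoc] using smul_mem _ r hx
  · rw [span_le]
    rintro _ ⟨l, hl, ⟨i, hil, his⟩, rfl⟩
    -- the last factor of a sorted product is its smallest, hence lies in the lower set `s`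
    obtain ⟨l', k, rfl⟩ : ∃ l' k, l = l' ++ [k] := by
      rcases List.eq_nil_or_concat l with rfl | ⟨l', k, rfl⟩
      · simp at hil
      · exact ⟨l', k, List.concat_eq_append ..⟩
    have hki : k ≤ i := by
      rcases List.mem_append.mp hil with hil' | hik
      · exact (List.pairwise_append.mp hl).2.2 i hil' k (List.mem_singleton_self k)
      · exact (List.mem_singleton.mp hik).ge
    exact subset_span ⟨(l'.map g).prod, k, hs hki his, by simp⟩

end SortedMonomials

section TensorAlgebra

open TensorAlgebra

variable {A V B : Type*} [CommRing A] [AddCommGroup V] [Module A V] [Ring B] [Algebra A B]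

theorem map_tensorMon (f : TensorAlgebra A V →ₐ[A] B) {ν : ℕ} (e : Fin (2 * ν) → V)
    (l : List (Fin (2 * ν))) :
    f (tensorMon A V e l) = (l.map fun i => f (ι A (e i))).prod := by
  rw [tensorMon, map_list_prod, List.map_map]
  rfl

theorem map_orderedMonSpanOne (f : TensorAlgebra A V →ₐ[A] B) {ν : ℕ} (e : Fin (2 * ν) → V) :
    (orderedMonSpanOne A V e).map f.toLinearMap =
      span A (sortedMonomialsMeeting (fun i => f (ι A (e i))) {i | (i : ℕ) < ν}) := by
  rw [orderedMonSpanOne, map_span]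
  congr 1
  ext x
  simp only [mem_image, sortedMonomialsMeeting]
  constructor
  · rintro ⟨_, ⟨l, hl, hlν, rfl⟩, rfl⟩
    exact ⟨l, hl, hlν, map_tensorMon f e l⟩
  · rintro ⟨l, hl, hlν, rfl⟩
    exact ⟨_, ⟨l, hl, hlν, rfl⟩, map_tensorMon f e l⟩

theorem adjoin_range_map_ι_basis {ι' : Type*} (f : TensorAlgebra A V →ₐ[A] B)
    (hf : Function.Surjective f) (e : Module.Basis ι' A V) :
    Algebra.adjoin A (range fun i => f (ι A (e i))) = ⊤ := by
  have hT : Algebra.adjoin A (range fun i => ι A (e i)) = ⊤ := by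
    refine eq_top_iff.mpr (adjoin_range_ι (R := A) (M := V) ▸ Algebra.adjoin_le ?_)
    rintro _ ⟨x, rfl⟩
    have hx : ι A x ∈ span A (ι A '' range e) :=
      apply_mem_span_image_of_mem_span (ι A) (e.span_eq ▸ mem_top)
    exact Algebra.span_le_adjoin A _ (by rwa [← range_comp] at hx)
  rw [range_comp' f, Algebra.adjoin_image, hT, Algebra.map_top, f.range_eq_top.mpr hf]

theorem span_mul_apply_span_image (φ : V →ₗ[A] B) {ι' : Type*} (e : ι' → V) (s : Set ι') :
    span A {w | ∃ a : B, ∃ x ∈ span A (e '' s), w = a * φ x} =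
      span A {w | ∃ a : B, ∃ i ∈ s, w = a * φ (e i)} := by
  apply le_antisymm
  · rw [span_le]
    rintro _ ⟨a, x, hx, rfl⟩
    induction hx using span_induction with
    | mem x hx => obtain ⟨i, hi, rfl⟩ := hx; exact subset_span ⟨a, i, hi, rfl⟩
    | zero => simp
    | add x y _ _ hx hy => simpa [mul_add] using add_mem hx hy
    | smul r x _ hx => simpa [mul_smul_comm] using smul_mem _ r hx
  · exact span_mono fun _ ⟨a, i, hi, hw⟩ => ⟨a, e i, subset_span ⟨i, hi, rfl⟩, hw⟩

theorem span_mul_ι_eq_map_orderedMonSpanOne {ν : ℕ} (e : Module.Basis (Fin (2 * ν)) A V)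
    (f : TensorAlgebra A V →ₐ[A] B) (hf : Function.Surjective f) (c : V → V → A)
    (hcomm : ∀ x y, f (ι A x) * f (ι A y) = f (ι A y) * f (ι A x) + algebraMap A B (c x y))
    (hc : ∀ i j : Fin (2 * ν), (i : ℕ) < ν → (j : ℕ) < ν → c (e i) (e j) = 0) :
    span A {w | ∃ a : B, ∃ x ∈ span A (e '' {i | (i : ℕ) < ν}), w = a * f (ι A x)} =
      (orderedMonSpanOne A V e).map f.toLinearMap := by
  set g : Fin (2 * ν) → B := fun i => f (ι A (e i))
  have hcommL : ∀ i ∈ {i : Fin (2 * ν) | (i : ℕ) < ν}, ∀ j ∈ {i : Fin (2 * ν) | (i : ℕ) < ν},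
      Commute (g i) (g j) := fun i hi j hj => by
    simpa [Commute, SemiconjBy, hc i j hi hj] using hcomm (e i) (e j)
  have hLower : IsLowerSet {i : Fin (2 * ν) | (i : ℕ) < ν} :=
    fun _ _ hji hj => lt_of_le_of_lt (Fin.le_def.mp hji) hj
  have htop := span_sortedMonomials_eq_top (fun i j => c (e i) (e j)) (fun i j => hcomm _ _)
    (adjoin_range_map_ι_basis f hf e)
  refine (span_mul_apply_span_image (f.toLinearMap ∘ₗ ι A) e _).trans ?_
  rw [map_orderedMonSpanOne]
  exact span_mul_eq_span_sortedMonomialsMeeting hLower hcommL htop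

end TensorAlgebra

theorem muW_ι_mul_ι {A V : Type*} [CommRing A] [AddCommGroup V] [Module A V]
    (ω : V →ₗ[A] V →ₗ[A] A) (lam : A) (x y : V) :
    muW A V ω lam (TensorAlgebra.ι A x) * muW A V ω lam (TensorAlgebra.ι A y) =
      muW A V ω lam (TensorAlgebra.ι A y) * muW A V ω lam (TensorAlgebra.ι A x) +
        algebraMap A (WeylAlgebra A V ω lam) (lam * ω x y) := by
  have h := RingQuot.mkAlgHom_rel A (s := weylRel A V ω lam) ⟨x, y, rfl, rfl⟩
  rw [map_sub, map_mul, map_mul, AlgHom.commutes] at h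
  exact sub_eq_iff_eq_add'.mp h

theorem muS_ι_mul_ι {A V : Type*} [CommRing A] [AddCommGroup V] [Module A V] (x y : V) :
    muS A V (TensorAlgebra.ι A x) * muS A V (TensorAlgebra.ι A y) =
      muS A V (TensorAlgebra.ι A y) * muS A V (TensorAlgebra.ι A x) := by
  have h := RingQuot.mkAlgHom_rel A (s := symCRel A V) ⟨x, y, rfl, rfl⟩
  rwa [map_mul, map_mul] at h

theorem lagrangian_left_ideal_pbw_general
    (A V : Type*) [CommRing A] [AddCommGroup V] [Module A V]
    (ν : ℕ) (e : Module.Basis (Fin (2 * ν)) A V)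
    (ω : V →ₗ[A] V →ₗ[A] A) (lam : A)
    (hL : ∀ i j : Fin (2 * ν), (i : ℕ) < ν → (j : ℕ) < ν → ω (e i) (e j) = 0)
    (L : Submodule A V)
    (hLdef : L = Submodule.span A (e '' {i : Fin (2 * ν) | (i : ℕ) < ν})) :
    (Submodule.span A
        {w : WeylAlgebra A V ω lam | ∃ a : WeylAlgebra A V ω lam, ∃ x ∈ L,
          w = a * muW A V ω lam (TensorAlgebra.ι A x)} =
      Submodule.map (muW A V ω lam) (orderedMonSpanOne A V (e : Fin (2 * ν) → V))) ∧
    (Submodule.span A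
        {s : SymCAlg A V | ∃ p : SymCAlg A V, ∃ x ∈ L,
          s = p * muS A V (TensorAlgebra.ι A x)} =
      Submodule.map (muS A V) (orderedMonSpanOne A V (e : Fin (2 * ν) → V))) := by
  subst hLdef
  constructor
  · exact span_mul_ι_eq_map_orderedMonSpanOne e
      (RingQuot.mkAlgHom A (weylRel A V ω lam) : _ →ₐ[A] WeylAlgebra A V ω lam)
      (RingQuot.mkAlgHom_surjective A _) (fun x y => lam * ω x y) (muW_ι_mul_ι ω lam)
      (fun i j hi hj => by simp [hL i j hi hj])
  · exact span_mul_ι_eq_map_orderedMonSpanOne e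
      (RingQuot.mkAlgHom A (symCRel A V) : _ →ₐ[A] SymCAlg A V)
      (RingQuot.mkAlgHom_surjective A _) (fun _ _ => 0)
      (fun x y => by rw [map_zero, add_zero]; exact muS_ι_mul_ι x y) (fun _ _ _ _ => rfl)

/-- the PBW isomorphism identifies the left ideal `I_L` of the Weyl
algebra generated by the Lagrangian `L` with the ideal `I_S^{(L)}` of the symmetric
algebra generated by `L`: both are the images of `S̃₁(V)` under `μ_W` and `μ_S`
respectively. -/
theorem lagrangian_left_ideal_pbw
    (A V : Type*) [CommRing A] [AddCommGroup V] [Module A V]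
    (ν : ℕ) (e : Module.Basis (Fin (2 * ν)) A V)
    (ω : V →ₗ[A] V →ₗ[A] A) (lam : A)
    (halt : ∀ x : V, ω x x = 0)
    (hnondeg : ∀ x : V, (∀ y : V, ω x y = 0) → x = 0)
    (hL : ∀ i j : Fin (2 * ν), (i : ℕ) < ν → (j : ℕ) < ν → ω (e i) (e j) = 0)
    (hL' : ∀ i j : Fin (2 * ν), ν ≤ (i : ℕ) → ν ≤ (j : ℕ) → ω (e i) (e j) = 0)
    (L : Submodule A V)
    (hLdef : L = Submodule.span A (e '' {i : Fin (2 * ν) | (i : ℕ) < ν})) :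
    (Submodule.span A
        {w : WeylAlgebra A V ω lam | ∃ a : WeylAlgebra A V ω lam, ∃ x ∈ L,
          w = a * muW A V ω lam (TensorAlgebra.ι A x)} =
      Submodule.map (muW A V ω lam) (orderedMonSpanOne A V (e : Fin (2 * ν) → V))) ∧
    (Submodule.span A
        {s : SymCAlg A V | ∃ p : SymCAlg A V, ∃ x ∈ L,
          s = p * muS A V (TensorAlgebra.ι A x)} =
      Submodule.map (muS A V) (orderedMonSpanOne A V (e : Fin (2 * ν) → V))) :=
  lagrangian_left_ideal_pbw_general A V ν e ω lam hL L hLdef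
end

section
/- Let V be a free A-module with basis e_1,...,e_{2ν} and dual basis ẽ¹,...,ẽ^{2ν} of V*, and let L = span(e_1,...,e_ν). Let I_Λ ⊆ Λ(V*) be the ideal generated by ẽ^{ν+1},...,ẽ^{2ν}. Suppose a ∈ W ⊗ Λⁿ(V*) (W any A-module) satisfies: a(x₁,...,x_n) ∈ U for all x₁,...,x_n ∈ L, where U ⊆ W is a submodule. Then a ∈ U ⊗ Λ(V*) + W ⊗ I_Λ. -/
/-!
The submodule `L` spanned by half of a basis has the span of the other half as a complement,
hence a linear projection `P` onto it. Then `b = a ∘ Pⁿ` takes values in `U`, because its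
arguments are pushed into `L`, while `c = a - b` vanishes on `Lⁿ`, where `P` is the identity.
-/

theorem Submodule.isProj_projection {R E : Type*} [Ring R] [AddCommGroup E] [Module R E]
    {p q : Submodule R E} (hpq : IsCompl p q) : LinearMap.IsProj p (p.projection q hpq) :=
  ⟨projection_apply_mem hpq, fun _ ↦ projection_apply_of_mem_left hpq⟩

theorem AlternatingMap.exists_add_of_isProj {R M N ι : Type*} [Semiring R] [AddCommMonoid M]
    [Module R M] [AddCommGroup N] [Module R N] {L : Submodule R M} {P : M →ₗ[R] M}
    (hP : LinearMap.IsProj L P) (U : Submodule R N) (a : M [⋀^ι]→ₗ[R] N)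
    (ha : ∀ x : ι → M, (∀ i, x i ∈ L) → a x ∈ U) :
    ∃ b c : M [⋀^ι]→ₗ[R] N, a = b + c ∧ (∀ x, b x ∈ U) ∧ ∀ x, (∀ i, x i ∈ L) → c x = 0 := by
  refine ⟨a.compLinearMap P, a - a.compLinearMap P, (add_sub_cancel _ _).symm,
    fun x ↦ ha (P ∘ x) fun i ↦ hP.map_mem (x i), fun x hx ↦ ?_⟩
  have hPx : (fun i ↦ P (x i)) = x := funext fun i ↦ hP.map_id (x i) (hx i)
  rw [sub_apply, compLinearMap_apply, hPx, sub_self]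

/-- Lemma 2: let `V` be free with basis `e_1, ..., e_{2ν}`, let
`L = span(e_1, ..., e_ν)`, and regard elements of `W ⊗ Λⁿ(V*)` as alternating
`n`-multilinear maps `Vⁿ → W`.  If `a` takes values in a submodule `U ⊆ W` whenever all
its arguments lie in `L`, then `a` decomposes as `a = b + c` where `b ∈ U ⊗ Λ(V*)`
(an alternating map with all values in `U`) and `c ∈ W ⊗ I_Λ` (an alternating map
annihilating `L`, i.e. vanishing whenever all arguments lie in `L`). -/
theorem valued_form_decomposition
    (A V W : Type*) [CommRing A] [AddCommGroup V] [Module A V]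
    [AddCommGroup W] [Module A W]
    (ν : ℕ) (e : Module.Basis (Fin (2 * ν)) A V)
    (L : Submodule A V)
    (hLdef : L = Submodule.span A (e '' {i : Fin (2 * ν) | (i : ℕ) < ν}))
    (U : Submodule A W) (n : ℕ)
    (a : V [⋀^Fin n]→ₗ[A] W)
    (ha : ∀ x : Fin n → V, (∀ i, x i ∈ L) → a x ∈ U) :
    ∃ b c : V [⋀^Fin n]→ₗ[A] W,
      a = b + c ∧
      (∀ x : Fin n → V, b x ∈ U) ∧
      (∀ x : Fin n → V, (∀ i, x i ∈ L) → c x = 0) := by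
  have hL : IsCompl L (Submodule.span A (e '' {i | (i : ℕ) < ν}ᶜ)) :=
    hLdef ▸ e.linearIndependent.isCompl_span_image e.span_eq isCompl_compl
  exact AlternatingMap.exists_add_of_isProj (Submodule.isProj_projection hL) U a ha
end

section
/- Let (V, ω) be a symplectic vector space with Lagrangian splitting V = L ⊕ L'. Consider the change of basis e'_i = A_i^j e_j where the matrix A is block-diagonal with respect to the splitting (A_α^β = A_β^α = 0 for α ≤ ν < β, i.e., A preserves both L and L'). Then the PBW isomorphism σ : W(V) → S(V) (defined via ordered monomials S̃(V)) is independent of the choice of adapted basis: the isomorphism constructed from {e'_i} equals the one constructed from {e_i}. -/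
/-!
Let `π` be the projection onto `L'` along `L`, and let `x ∈ V` act on the polynomial algebra
`A[X_i]` (mapped to `S(V)` by `X_i ↦ e_i`) by multiplication with its linear polynomial plus `λ ∂ₓ`,
where `∂ₓ` is the derivation with `∂ₓ X_j = ω(x, π e_j)`. Identifying vectors with linear
polynomials, isotropy of `L` and `L'` gives `∂ₓ y - ∂_y x = ω(x, π y) - ω(y, π x) = ω(x, y)`, so
these operators satisfy the Weyl relations and define a representation `ρ` of `W(V)`; put
`σ w := ρ(w) 1 ∈ S(V)`. On a monomial whose `L'`-factors all stand to the left of its `L`-factors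
every derivation term vanishes, so `σ (μ_W t) = μ_S t`. The ordered monomials of every adapted
basis have this shape, so the single map `σ` recovers `μ_S` from `μ_W` on both `S̃(V)` and `S̃'(V)`.
-/

namespace SymCAlg

variable (A V : Type*) [CommRing A] [AddCommGroup V] [Module A V]

theorem commute_mkAlgHom_ι (x : V) (b : TensorAlgebra A V) :
    Commute (RingQuot.mkAlgHom A (symCRel A V) (TensorAlgebra.ι A x))
      (RingQuot.mkAlgHom A (symCRel A V) b) := by
  induction b using TensorAlgebra.induction with
  | algebraMap r => rw [AlgHom.commutes]; exact Algebra.commute_algebraMap_right r _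
  | ι y =>
    have h := RingQuot.mkAlgHom_rel A (show symCRel A V _ _ from ⟨x, y, rfl, rfl⟩)
    rwa [map_mul, map_mul] at h
  | add a b ha hb => rw [map_add]; exact ha.add_right hb
  | mul a b ha hb => rw [map_mul]; exact ha.mul_right hb

theorem commute_mkAlgHom (a b : TensorAlgebra A V) :
    Commute (RingQuot.mkAlgHom A (symCRel A V) a) (RingQuot.mkAlgHom A (symCRel A V) b) := by
  induction a using TensorAlgebra.induction with
  | algebraMap r => rw [AlgHom.commutes]; exact Algebra.commute_algebraMap_left r _
  | ι x => exact commute_mkAlgHom_ι A V x b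
  | add a c ha hc => rw [map_add]; exact ha.add_left hc
  | mul a c ha hc => rw [map_mul]; exact ha.mul_left hc

noncomputable instance instCommRing : CommRing (SymCAlg A V) :=
  { (inferInstance : Ring (SymCAlg A V)) with
    mul_comm := fun x y => by
      obtain ⟨a, rfl⟩ := RingQuot.mkAlgHom_surjective A (symCRel A V) x
      obtain ⟨b, rfl⟩ := RingQuot.mkAlgHom_surjective A (symCRel A V) y
      exact commute_mkAlgHom A V a b }

section Basis

open MvPolynomial

variable {A V} {ι : Type*} (e : Module.Basis ι A V)

theorem aeval_constr_X (v : V) :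
    aeval (fun i => muS A V (TensorAlgebra.ι A (e i))) (e.constr A (X : ι → MvPolynomial ι A) v)
      = muS A V (TensorAlgebra.ι A v) := by
  have : (aeval fun i => muS A V (TensorAlgebra.ι A (e i))).toLinearMap ∘ₗ e.constr A X
      = muS A V ∘ₗ TensorAlgebra.ι A :=
    e.ext fun i => by simp
  exact congr($this v)

theorem muS_list_prod (l : List (TensorAlgebra A V)) : muS A V l.prod = (l.map (muS A V)).prod :=
  map_list_prod (RingQuot.mkAlgHom A (symCRel A V)) l

end Basis

end SymCAlg

section Splitting

variable {A V : Type*} [CommRing A] [AddCommGroup V] [Module A V]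

/-- The Lagrangian splitting `V = L ⊕ L'`, encoded by a map `π` onto `L'`: the range of `π` plays
`L'` and the vectors `u - π u` play `L`. -/
structure IsIsotropicSplitting (ω : V →ₗ[A] V →ₗ[A] A) (π : V →ₗ[A] V) : Prop where
  range : ∀ u v, ω (π u) (π v) = 0
  ker : ∀ u v, ω (u - π u) (v - π v) = 0

theorem LinearMap.IsAlt.apply_proj_sub_apply_proj {ω : V →ₗ[A] V →ₗ[A] A} (hω : ω.IsAlt)
    {π : V →ₗ[A] V} (hπ : IsIsotropicSplitting ω π) (x y : V) :
    ω x (π y) - ω y (π x) = ω x y := by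
  have hker := hπ.ker x y
  simp only [map_sub, LinearMap.sub_apply, hπ.range] at hker
  rw [← hω.neg (π x) y]
  linear_combination -hker

end Splitting

namespace Module.Basis

variable {ι A V : Type*} [CommRing A] [AddCommGroup V] [Module A V]
  (e : Basis ι A V) (p : ι → Prop) [DecidablePred p]

noncomputable def projOn : V →ₗ[A] V :=
  e.constr A fun j => if p j then e j else 0

theorem projOn_basis (i : ι) : e.projOn p (e i) = if p i then e i else 0 :=
  e.constr_basis A _ i

theorem repr_projOn [Fintype ι] (v : V) (j : ι) :
    e.repr (e.projOn p v) j = if p j then e.repr v j else 0 := by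
  have : e.projOn p v = ∑ i, (if p i then e.repr v i else 0) • e i := by
    rw [projOn, constr_apply_fintype]
    exact Finset.sum_congr rfl fun i _ => by split_ifs <;> simp
  rw [this, repr_sum_self]

theorem projOn_eq_zero [Fintype ι] {v : V} (h : ∀ j, p j → e.repr v j = 0) : e.projOn p v = 0 :=
  e.ext_elem_iff.mpr fun j => by rw [repr_projOn]; split_ifs with hj <;> simp [h j, hj]

theorem projOn_eq_self [Fintype ι] {v : V} (h : ∀ j, ¬p j → e.repr v j = 0) : e.projOn p v = v :=
  e.ext_elem_iff.mpr fun j => by rw [repr_projOn]; split_ifs with hj <;> simp [h j, hj]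

theorem isIsotropicSplitting_projOn (ω : V →ₗ[A] V →ₗ[A] A)
    (hL : ∀ i j, ¬p i → ¬p j → ω (e i) (e j) = 0) (hL' : ∀ i j, p i → p j → ω (e i) (e j) = 0) :
    IsIsotropicSplitting ω (e.projOn p) := by
  constructor
  · have : ω.compl₁₂ (e.projOn p) (e.projOn p) = 0 := LinearMap.ext_basis e e fun i j => by
      simp only [LinearMap.compl₁₂_apply, projOn_basis, LinearMap.zero_apply]
      split_ifs with hi hj <;> simp [hL' i j, *]
    exact fun u v => congr($this u v)
  · let κ := LinearMap.id - e.projOn p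
    have : ω.compl₁₂ κ κ = 0 := LinearMap.ext_basis e e fun i j => by
      simp only [κ, LinearMap.compl₁₂_apply, LinearMap.sub_apply, LinearMap.id_apply,
        projOn_basis, LinearMap.zero_apply]
      split_ifs with hi hj <;> simp [hL i j, *]
    exact fun u v => congr($this u v)

end Module.Basis

namespace WeylAlgebra

open MvPolynomial

variable {ι A V : Type*} [CommRing A] [AddCommGroup V] [Module A V]
  (e : Module.Basis ι A V) (ω : V →ₗ[A] V →ₗ[A] A) (lam : A) (π : V →ₗ[A] V)

noncomputable def fockDerivation (x : V) : Derivation A (MvPolynomial ι A) (MvPolynomial ι A) :=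
  mkDerivation A fun j => C (ω x (π (e j)))

theorem fockDerivation_add (x y : V) :
    fockDerivation e ω π (x + y) = fockDerivation e ω π x + fockDerivation e ω π y :=
  derivation_ext fun j => by simp [fockDerivation, mkDerivation_X]

theorem fockDerivation_smul (c : A) (x : V) :
    fockDerivation e ω π (c • x) = c • fockDerivation e ω π x :=
  derivation_ext fun j => by simp [fockDerivation, mkDerivation_X, smul_eq_C_mul]

theorem fockDerivation_constr (x y : V) :
    fockDerivation e ω π x (e.constr A X y) = C (ω x (π y)) := by
  have : (fockDerivation e ω π x : MvPolynomial ι A →ₗ[A] MvPolynomial ι A) ∘ₗ e.constr A X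
      = (Algebra.linearMap A (MvPolynomial ι A)) ∘ₗ ω x ∘ₗ π :=
    e.ext fun j => by simp [fockDerivation, mkDerivation_X, algebraMap_eq]
  exact congr($this y)

theorem fockDerivation_comm (x y : V) (f : MvPolynomial ι A) :
    fockDerivation e ω π x (fockDerivation e ω π y f)
      = fockDerivation e ω π y (fockDerivation e ω π x f) := by
  have : ⁅fockDerivation e ω π x, fockDerivation e ω π y⁆ = 0 :=
    derivation_ext fun j => by
      simp [Derivation.commutator_apply, fockDerivation, mkDerivation_X]
  simpa [Derivation.commutator_apply, sub_eq_zero] using congr($this f)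

theorem fockDerivation_list_prod (x : V) (l : List V) (h : ∀ y ∈ l, ω x (π y) = 0) :
    fockDerivation e ω π x (l.map (e.constr A X)).prod = 0 := by
  induction l with
  | nil => simp
  | cons y l ih =>
    simp only [List.forall_mem_cons] at h
    rw [List.map_cons, List.prod_cons, Derivation.leibniz, ih h.2, fockDerivation_constr, h.1,
      map_zero, smul_zero, smul_zero, add_zero]

noncomputable def fockOp : V →ₗ[A] Module.End A (MvPolynomial ι A) where
  toFun x := LinearMap.mulLeft A (e.constr A X x) + lam • (fockDerivation e ω π x).toLinearMap
  map_add' x y := LinearMap.ext fun f => by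
    simp only [map_add, fockDerivation_add, LinearMap.add_apply, LinearMap.smul_apply,
      LinearMap.mulLeft_apply, Derivation.coe_add_linearMap, Derivation.coeFn_coe,
      add_mul, smul_add]
    abel
  map_smul' c x := LinearMap.ext fun f => by
    simp only [map_smul, fockDerivation_smul, LinearMap.add_apply, LinearMap.smul_apply,
      LinearMap.mulLeft_apply, Derivation.coe_smul_linearMap, Derivation.coeFn_coe,
      RingHom.id_apply, smul_mul_assoc]
    module

theorem fockOp_apply (x : V) (f : MvPolynomial ι A) :
    fockOp e ω lam π x f = e.constr A X x * f + lam • fockDerivation e ω π x f :=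
  rfl

theorem fockOp_commutator (hω : ω.IsAlt) (hπ : IsIsotropicSplitting ω π) (x y : V) :
    fockOp e ω lam π x * fockOp e ω lam π y - fockOp e ω lam π y * fockOp e ω lam π x
      = algebraMap A (Module.End A (MvPolynomial ι A)) (lam * ω x y) := by
  refine LinearMap.ext fun f => ?_
  have hxy : ω x (π y) - ω y (π x) = ω x y := hω.apply_proj_sub_apply_proj hπ x y
  simp only [LinearMap.sub_apply, Module.End.mul_apply, Module.algebraMap_end_apply, fockOp_apply,
    map_add, Derivation.map_smul, Derivation.leibniz, fockDerivation_constr,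
    fockDerivation_comm e ω π x y f, ← hxy]
  simp only [smul_eq_mul, Algebra.smul_def, algebraMap_eq, map_mul, map_sub]
  ring

noncomputable def fockRep (hω : ω.IsAlt) (hπ : IsIsotropicSplitting ω π) :
    WeylAlgebra A V ω lam →ₐ[A] Module.End A (MvPolynomial ι A) :=
  RingQuot.liftAlgHom A ⟨TensorAlgebra.lift A (fockOp e ω lam π), by
    rintro _ _ ⟨x, y, rfl, rfl⟩
    rw [map_sub, map_mul, map_mul, TensorAlgebra.lift_ι_apply, TensorAlgebra.lift_ι_apply,
      AlgHom.commutes]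
    exact fockOp_commutator e ω lam π hω hπ x y⟩

theorem fockRep_muW (hω : ω.IsAlt) (hπ : IsIsotropicSplitting ω π) (t : TensorAlgebra A V) :
    fockRep e ω lam π hω hπ (muW A V ω lam t) = TensorAlgebra.lift A (fockOp e ω lam π) t :=
  RingQuot.liftAlgHom_mkAlgHom_apply _ _ _ _

theorem fockOp_list_prod_apply_one (l : List V) (hl : l.Pairwise fun x y => ω x (π y) = 0) :
    (l.map (fockOp e ω lam π)).prod 1 = (l.map (e.constr A X)).prod := by
  induction l with
  | nil => rfl
  | cons x l ih =>
    rw [List.pairwise_cons] at hl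
    rw [List.map_cons, List.prod_cons, Module.End.mul_apply, ih hl.2, fockOp_apply,
      fockDerivation_list_prod e ω π x l hl.1, smul_zero, add_zero, List.map_cons, List.prod_cons]

noncomputable def symbol (hω : ω.IsAlt) (hπ : IsIsotropicSplitting ω π) :
    WeylAlgebra A V ω lam →ₗ[A] SymCAlg A V :=
  (aeval fun i => muS A V (TensorAlgebra.ι A (e i))).toLinearMap ∘ₗ
    LinearMap.applyₗ 1 ∘ₗ (fockRep e ω lam π hω hπ).toLinearMap

theorem symbol_muW (hω : ω.IsAlt) (hπ : IsIsotropicSplitting ω π) (t : TensorAlgebra A V) :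
    symbol e ω lam π hω hπ (muW A V ω lam t)
      = aeval (fun i => muS A V (TensorAlgebra.ι A (e i)))
          (TensorAlgebra.lift A (fockOp e ω lam π) t 1) := by
  change aeval _ (fockRep e ω lam π hω hπ (muW A V ω lam t) 1) = _
  rw [fockRep_muW]

theorem symbol_muW_list_prod (hω : ω.IsAlt) (hπ : IsIsotropicSplitting ω π) (l : List V)
    (hl : l.Pairwise fun x y => ω x (π y) = 0) :
    symbol e ω lam π hω hπ (muW A V ω lam (l.map (TensorAlgebra.ι A)).prod)
      = muS A V (l.map (TensorAlgebra.ι A)).prod := by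
  rw [symbol_muW, map_list_prod, List.map_map]
  simp only [Function.comp_def, TensorAlgebra.lift_ι_apply]
  rw [fockOp_list_prod_apply_one e ω lam π l hl, map_list_prod, List.map_map,
    SymCAlg.muS_list_prod, List.map_map]
  congr 1
  exact List.map_congr_left fun v _ => SymCAlg.aeval_constr_X e v

theorem pairwise_map_of_nonincreasing (hπ : IsIsotropicSplitting ω π) {ν : ℕ} (f : Fin (2 * ν) → V)
    (hfL : ∀ i : Fin (2 * ν), (i : ℕ) < ν → π (f i) = 0)
    (hfL' : ∀ i : Fin (2 * ν), ν ≤ (i : ℕ) → π (f i) = f i)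
    {l : List (Fin (2 * ν))} (hl : l.Pairwise fun a b => b ≤ a) :
    (l.map f).Pairwise fun x y => ω x (π y) = 0 := by
  refine List.pairwise_map.mpr (hl.imp fun {a b} hba => ?_)
  rcases lt_or_ge (b : ℕ) ν with hb | hb
  · rw [hfL b hb, map_zero]
  · rw [← hfL' a (hb.trans hba)]
    exact hπ.range _ _

theorem symbol_muW_eq_muS_of_mem_orderedMonSpan (hω : ω.IsAlt) (hπ : IsIsotropicSplitting ω π)
    {ν : ℕ} (f : Fin (2 * ν) → V) (hfL : ∀ i : Fin (2 * ν), (i : ℕ) < ν → π (f i) = 0)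
    (hfL' : ∀ i : Fin (2 * ν), ν ≤ (i : ℕ) → π (f i) = f i) {t : TensorAlgebra A V}
    (ht : t ∈ orderedMonSpan A V f) :
    symbol e ω lam π hω hπ (muW A V ω lam t) = muS A V t := by
  refine LinearMap.eqOn_span (f := symbol e ω lam π hω hπ ∘ₗ muW A V ω lam) ?_ ht
  rintro _ ⟨l, hl, rfl⟩
  have hmon : tensorMon A V f l = ((l.map f).map (TensorAlgebra.ι A)).prod := by
    rw [tensorMon, List.map_map]; rfl
  rw [hmon]
  exact symbol_muW_list_prod e ω lam π hω hπ _ (pairwise_map_of_nonincreasing ω π hπ f hfL hfL' hl)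

end WeylAlgebra

theorem pbw_isomorphism_basis_independent_general
    (A V : Type*) [CommRing A] [AddCommGroup V] [Module A V]
    (ν : ℕ) (e e' : Module.Basis (Fin (2 * ν)) A V)
    (ω : V →ₗ[A] V →ₗ[A] A) (lam : A)
    (halt : ∀ x : V, ω x x = 0)
    (hL : ∀ i j : Fin (2 * ν), (i : ℕ) < ν → (j : ℕ) < ν → ω (e i) (e j) = 0)
    (hL' : ∀ i j : Fin (2 * ν), ν ≤ (i : ℕ) → ν ≤ (j : ℕ) → ω (e i) (e j) = 0)
    (hblock : ∀ i j : Fin (2 * ν),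
      (((i : ℕ) < ν ∧ ν ≤ (j : ℕ)) ∨ ((j : ℕ) < ν ∧ ν ≤ (i : ℕ))) →
        e.repr (e' i) j = 0) :
    ∀ a ∈ orderedMonSpan A V (e : Fin (2 * ν) → V),
      ∀ a' ∈ orderedMonSpan A V (e' : Fin (2 * ν) → V),
        muW A V ω lam a = muW A V ω lam a' → muS A V a = muS A V a' := by
  let π := e.projOn fun j => ν ≤ (j : ℕ)
  have hπ : IsIsotropicSplitting ω π := e.isIsotropicSplitting_projOn _ ω
    (fun i j hi hj => hL i j (not_le.mp hi) (not_le.mp hj)) hL'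
  have σ := WeylAlgebra.symbol_muW_eq_muS_of_mem_orderedMonSpan e ω lam π halt hπ (ν := ν)
  intro a ha a' ha' hW
  rw [← σ e (fun i hi => by simp [π, Module.Basis.projOn_basis, hi.not_ge])
      (fun i hi => by simp [π, Module.Basis.projOn_basis, hi]) ha,
    ← σ e' (fun i hi => e.projOn_eq_zero _ fun j hj => hblock i j (.inl ⟨hi, hj⟩))
      (fun i hi => e.projOn_eq_self _ fun j hj => hblock i j (.inr ⟨not_le.mp hj, hi⟩)) ha', hW]

/-- the PBW isomorphism `σ : W(V) → S(V)` does not depend on the choice of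
basis adapted to the Lagrangian splitting `V = L ⊕ L'`.  Concretely: if `e` and `e'` are
two bases related by a block-diagonal change of basis (each of `e`, `e'` has its first
`ν` vectors spanning the Lagrangian `L` and its last `ν` vectors spanning the Lagrangian
`L'`), then whenever ordered monomial combinations `a ∈ S̃(V)` (for `e`) and
`a' ∈ S̃'(V)` (for `e'`) have the same image in `W(V)`, they also have the same image in
`S(V)`; i.e. the isomorphisms `μ_S ι₁ (μ_W ι₁)⁻¹` constructed from `e` and `e'`
coincide. -/
theorem pbw_isomorphism_basis_independent
    (A V : Type*) [CommRing A] [AddCommGroup V] [Module A V]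
    (ν : ℕ) (e e' : Module.Basis (Fin (2 * ν)) A V)
    (ω : V →ₗ[A] V →ₗ[A] A) (lam : A)
    (halt : ∀ x : V, ω x x = 0)
    (hnondeg : ∀ x : V, (∀ y : V, ω x y = 0) → x = 0)
    (hL : ∀ i j : Fin (2 * ν), (i : ℕ) < ν → (j : ℕ) < ν → ω (e i) (e j) = 0)
    (hL' : ∀ i j : Fin (2 * ν), ν ≤ (i : ℕ) → ν ≤ (j : ℕ) → ω (e i) (e j) = 0)
    (hblock : ∀ i j : Fin (2 * ν),
      (((i : ℕ) < ν ∧ ν ≤ (j : ℕ)) ∨ ((j : ℕ) < ν ∧ ν ≤ (i : ℕ))) →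
        e.repr (e' i) j = 0) :
    ∀ a ∈ orderedMonSpan A V (e : Fin (2 * ν) → V),
      ∀ a' ∈ orderedMonSpan A V (e' : Fin (2 * ν) → V),
        muW A V ω lam a = muW A V ω lam a' → muS A V a = muS A V a' :=
  pbw_isomorphism_basis_independent_general A V ν e e' ω lam halt hL hL' hblock
end
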